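/- arXiv:2410.12712 — 10 statements merged into one kernel-verified Lean document; each statement's English description precedes it below -/
import Mathlib

section
/- Let 0 < ε ≤ 1/36 be a real number, set δ = 1/6 − √(1/36 − ε), and let t be a positive natural number. Define two weight functions on x : Fin t → Bool by p(x) = ∏_{i} (if x i then 2/3 else 1/3) and q(x) = ∏_{i} (if x i then 2/3 − δ else 1/3 + δ). If the total variation distance (1/2) Σ_{x : Fin t → Bool} |p(x) − q(x)| is at least 1/3, then t ≥ 1/(360 ε²). -/
/-!
Compare `p` and `q` through the Bhattacharyya coefficient `BC(p, q) = ∑ √(p q)`. Cauchy–Schwarz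
applied to `√(min p q)` and `√(max p q)` gives `BC² + TV² ≤ 1`, so `BC² ≤ 8/9`. The coefficient is
multiplicative on product distributions, so `BC = ρ ^ t` for the one-letter coefficient `ρ`, and
a direct computation gives `ρ² = 1/2 + √(1 - 36ε)/18 + 4√(1 + 9ε/2)/9`. The first-order terms in
`ε` of the two square roots cancel, leaving `ρ² ≥ 1 - 297ε²/8`, and Bernoulli's inequality turns
`(1 - 297ε²/8) ^ t ≤ 8/9` into `t ≥ 8/(2673 ε²) ≥ 1/(360 ε²)`.
-/

open Finset

noncomputable section

section FiniteDistribution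

variable {α : Type*} [Fintype α]

def bhattacharyyaCoeff (p q : α → ℝ) : ℝ := ∑ x, √(p x * q x)

def tvDist (p q : α → ℝ) : ℝ := (1 / 2 : ℝ) * ∑ x, |p x - q x|

lemma sum_min_mul_sum_max {p q : α → ℝ} (hp : ∑ x, p x = 1) (hq : ∑ x, q x = 1) :
    (∑ x, min (p x) (q x)) * ∑ x, max (p x) (q x) = 1 - tvDist p q ^ 2 := by
  have hadd : ∑ x, min (p x) (q x) + ∑ x, max (p x) (q x) = 2 := by
    rw [← sum_add_distrib]
    simp only [min_add_max, sum_add_distrib, hp, hq]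
    norm_num
  have hsub : ∑ x, max (p x) (q x) - ∑ x, min (p x) (q x) = 2 * tvDist p q := by
    rw [← sum_sub_distrib, tvDist]
    simp only [max_sub_min_eq_abs']
    ring
  obtain ⟨hmin, hmax⟩ : ∑ x, min (p x) (q x) = 1 - tvDist p q ∧
      ∑ x, max (p x) (q x) = 1 + tvDist p q := ⟨by linarith, by linarith⟩
  rw [hmin, hmax]
  ring

theorem bhattacharyyaCoeff_sq_add_tvDist_sq_le_one {p q : α → ℝ} (hp0 : ∀ x, 0 ≤ p x)
    (hq0 : ∀ x, 0 ≤ q x) (hp : ∑ x, p x = 1) (hq : ∑ x, q x = 1) :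
    bhattacharyyaCoeff p q ^ 2 + tvDist p q ^ 2 ≤ 1 := by
  have hmin : ∀ x, 0 ≤ min (p x) (q x) := fun x => le_min (hp0 x) (hq0 x)
  have hmax : ∀ x, 0 ≤ max (p x) (q x) := fun x => (hp0 x).trans (le_max_left _ _)
  have hCS := sum_mul_sq_le_sq_mul_sq univ (fun x => √(min (p x) (q x)))
    (fun x => √(max (p x) (q x)))
  simp only [Real.sq_sqrt (hmin _), Real.sq_sqrt (hmax _), ← Real.sqrt_mul (hmin _),
    min_mul_max] at hCS
  rw [sum_min_mul_sum_max hp hq] at hCS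
  unfold bhattacharyyaCoeff
  linarith

end FiniteDistribution

section Product

variable {ι β : Type*} [Fintype ι] [DecidableEq ι] [Fintype β]

lemma sum_pi_prod_eq_pow (f : β → ℝ) :
    ∑ x : ι → β, ∏ i, f (x i) = (∑ b, f b) ^ Fintype.card ι := by
  rw [← Fintype.prod_sum, prod_const, card_univ]

lemma sum_pi_prod_eq_one {f : β → ℝ} (hf : ∑ b, f b = 1) : ∑ x : ι → β, ∏ i, f (x i) = 1 := by
  rw [sum_pi_prod_eq_pow, hf, one_pow]

lemma bhattacharyyaCoeff_pi {f g : β → ℝ} (hf : ∀ b, 0 ≤ f b) (hg : ∀ b, 0 ≤ g b) :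
    bhattacharyyaCoeff (fun x : ι → β => ∏ i, f (x i)) (fun x => ∏ i, g (x i)) =
      bhattacharyyaCoeff f g ^ Fintype.card ι := by
  simp only [bhattacharyyaCoeff, ← prod_mul_distrib,
    Real.sqrt_prod _ fun i _ => mul_nonneg (hf _) (hg _)]
  exact sum_pi_prod_eq_pow fun b => √(f b * g b)

end Product

def coin (a : ℝ) : Bool → ℝ := fun b => if b then 1 - a else a

lemma coin_nonneg {a : ℝ} (h0 : 0 ≤ a) (h1 : a ≤ 1) (b : Bool) : 0 ≤ coin a b := by
  cases b <;> simp [coin] <;> linarith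

lemma sum_coin (a : ℝ) : ∑ b, coin a b = 1 := by
  simp [coin]

lemma bhattacharyyaCoeff_coin (a c : ℝ) :
    bhattacharyyaCoeff (coin a) (coin c) = √(a * c) + √((1 - a) * (1 - c)) := by
  simp [bhattacharyyaCoeff, coin, add_comm]

namespace Real

lemma le_sqrt_one_add {x : ℝ} (hx : 0 ≤ x) : 1 + x / 2 - x ^ 2 / 8 ≤ √(1 + x) := by
  have hs := sq_sqrt (by linarith : (0 : ℝ) ≤ 1 + x)
  have hs1 : 1 ≤ √(1 + x) := one_le_sqrt.mpr (by linarith)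
  -- `√(1 + x) - (1 + x/2 - x²/8) = (s - 1)² ((s + 1)² - 4) / 8` with `s = √(1 + x)`
  nlinarith [mul_nonneg (sq_nonneg (√(1 + x) - 1)) (by nlinarith : 0 ≤ (√(1 + x) + 1) ^ 2 - 4)]

lemma le_sqrt_one_sub {x : ℝ} (hx : x ≤ 1) : 1 - x / 2 - x ^ 2 / 2 ≤ √(1 - x) := by
  have hs := sq_sqrt (by linarith : (0 : ℝ) ≤ 1 - x)
  have hs0 := sqrt_nonneg (1 - x)
  -- `√(1 - x) - (1 - x/2 - x²/2) = (1 - s)² ((1 + s)² - 1) / 2` with `s = √(1 - x)`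
  nlinarith [mul_nonneg (sq_nonneg (1 - √(1 - x))) (by nlinarith : 0 ≤ (1 + √(1 - x)) ^ 2 - 1)]

end Real

lemma sqrt_one_div_36_sub_le {ε : ℝ} (hε : 0 ≤ ε) : √(1 / 36 - ε) ≤ 1 / 6 :=
  Real.sqrt_le_iff.mpr ⟨by norm_num, by linarith⟩

lemma bhattacharyyaCoeff_coin_sq {ε : ℝ} (hε0 : 0 ≤ ε) (hε1 : ε ≤ 1 / 36) :
    bhattacharyyaCoeff (coin (1 / 3)) (coin (1 / 2 - √(1 / 36 - ε))) ^ 2 =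
      1 / 2 + √(1 - 36 * ε) / 18 + 4 * √(1 + 9 * ε / 2) / 9 := by
  set s := √(1 / 36 - ε) with hs_def
  have hs_sq : s ^ 2 = 1 / 36 - ε := Real.sq_sqrt (by linarith)
  have hs : s = √(1 - 36 * ε) / 6 := by
    rw [hs_def, show 1 / 36 - ε = (1 - 36 * ε) / 6 ^ 2 by ring, Real.sqrt_div' _ (by positivity),
      Real.sqrt_sq (by norm_num)]
  have hA : 0 ≤ 1 / 3 * (1 / 2 - s) := by linarith [sqrt_one_div_36_sub_le hε0]
  have hB : 0 ≤ (1 - 1 / 3) * (1 - (1 / 2 - s)) := by linarith [Real.sqrt_nonneg (1 / 36 - ε)]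
  have hAB : √(1 / 3 * (1 / 2 - s)) * √((1 - 1 / 3) * (1 - (1 / 2 - s))) =
      2 / 9 * √(1 + 9 * ε / 2) := by
    rw [← Real.sqrt_mul hA, show 1 / 3 * (1 / 2 - s) * ((1 - 1 / 3) * (1 - (1 / 2 - s))) =
      (2 / 9) ^ 2 * (1 + 9 * ε / 2) by linear_combination (-2 / 9 : ℝ) * hs_sq,
      Real.sqrt_mul (by positivity), Real.sqrt_sq (by norm_num)]
  rw [bhattacharyyaCoeff_coin, add_sq, Real.sq_sqrt hA, Real.sq_sqrt hB, mul_assoc, hAB, hs]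
  ring

lemma one_sub_le_bhattacharyyaCoeff_coin_sq {ε : ℝ} (hε0 : 0 ≤ ε) (hε1 : ε ≤ 1 / 36) :
    1 - 297 / 8 * ε ^ 2 ≤
      bhattacharyyaCoeff (coin (1 / 3)) (coin (1 / 2 - √(1 / 36 - ε))) ^ 2 := by
  rw [bhattacharyyaCoeff_coin_sq hε0 hε1]
  have h₁ := Real.le_sqrt_one_sub (x := 36 * ε) (by linarith)
  have h₂ := Real.le_sqrt_one_add (x := 9 * ε / 2) (by positivity)
  nlinarith

end

theorem stmt_2_general (ε : ℝ) (hε0 : 0 < ε) (hε1 : ε ≤ 1 / 36)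
    (δ : ℝ) (hδ : δ = 1 / 6 - Real.sqrt (1 / 36 - ε))
    (t : ℕ)
    (p q : (Fin t → Bool) → ℝ)
    (hp : ∀ x, p x = ∏ i, (if x i then (2 : ℝ) / 3 else 1 / 3))
    (hq : ∀ x, q x = ∏ i, (if x i then 2 / 3 - δ else 1 / 3 + δ))
    (hTV : (1 / 2 : ℝ) * ∑ x : Fin t → Bool, |p x - q x| ≥ 1 / 3) :
    (t : ℝ) ≥ 1 / (360 * ε ^ 2) := by
  have ha0 : 0 ≤ 1 / 2 - √(1 / 36 - ε) := by linarith [sqrt_one_div_36_sub_le hε0.le]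
  have ha1 : 1 / 2 - √(1 / 36 - ε) ≤ 1 := by linarith [Real.sqrt_nonneg (1 / 36 - ε)]
  set a := 1 / 2 - √(1 / 36 - ε)
  obtain rfl : p = fun x => ∏ i, coin (1 / 3) (x i) := by
    funext x; rw [hp]; refine prod_congr rfl fun i _ => ?_; cases x i <;> norm_num [coin]
  obtain rfl : q = fun x => ∏ i, coin a (x i) := by
    funext x; rw [hq]; refine prod_congr rfl fun i _ => ?_; cases x i <;> simp [coin, a, hδ] <;> ring
  have hp0 := coin_nonneg (a := 1 / 3) (by norm_num) (by norm_num)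
  have hq0 := coin_nonneg ha0 ha1
  set ρ := bhattacharyyaCoeff (coin (1 / 3)) (coin a)
  have hBC : (ρ ^ 2) ^ t ≤ 8 / 9 := by
    have hLeCam := bhattacharyyaCoeff_sq_add_tvDist_sq_le_one
      (fun x => prod_nonneg fun i _ => hp0 (x i)) (fun x => prod_nonneg fun i _ => hq0 (x i))
      (sum_pi_prod_eq_one (ι := Fin t) (sum_coin _)) (sum_pi_prod_eq_one (sum_coin _))
    rw [bhattacharyyaCoeff_pi hp0 hq0, Fintype.card_fin, ← pow_mul, mul_comm, pow_mul] at hLeCam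
    have hTV' : 1 / 3 ≤ tvDist _ _ := hTV
    nlinarith
  have hρ : 1 + -(297 / 8 * ε ^ 2) ≤ ρ ^ 2 := by
    linarith [one_sub_le_bhattacharyyaCoeff_coin_sq hε0.le hε1]
  have hBernoulli : 1 + t * -(297 / 8 * ε ^ 2) ≤ (ρ ^ 2) ^ t :=
    (one_add_mul_le_pow (by nlinarith) t).trans (pow_le_pow_left₀ (by nlinarith) hρ t)
  have ht : 1 / 9 ≤ t * (297 / 8 * ε ^ 2) := by linarith
  rw [ge_iff_le, div_le_iff₀ (by positivity)]
  nlinarith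

/-- Classical core of the `Ω(1/ε²)` lower bound for purity estimation: if the total
variation distance between the `t`-fold products of the distributions `(1/3, 2/3)` and
`(1/3 + δ, 2/3 − δ)` on `Bool` (with `δ = 1/6 − √(1/36 − ε)`) is at least `1/3`, then
`t ≥ 1/(360 ε²)`. -/
theorem stmt_2 (ε : ℝ) (hε0 : 0 < ε) (hε1 : ε ≤ 1 / 36)
    (δ : ℝ) (hδ : δ = 1 / 6 - Real.sqrt (1 / 36 - ε))
    (t : ℕ) (ht : 0 < t)
    (p q : (Fin t → Bool) → ℝ)
    (hp : ∀ x, p x = ∏ i, (if x i then (2 : ℝ) / 3 else 1 / 3))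
    (hq : ∀ x, q x = ∏ i, (if x i then 2 / 3 - δ else 1 / 3 + δ))
    (hTV : (1 / 2 : ℝ) * ∑ x : Fin t → Bool, |p x - q x| ≥ 1 / 3) :
    (t : ℝ) ≥ 1 / (360 * ε ^ 2) :=
  stmt_2_general ε hε0 hε1 δ hδ t p q hp hq hTV
end

section
/- Let d, s ≥ 1 be natural numbers, let μ be the Haar probability measure on the unitary group of (Fin d × Fin s)-indexed complex matrices, and let e₀ be a fixed standard basis unit vector of ℂ^(Fin d × Fin s). For a unitary U let v = U e₀ and let ψ_U be the d×d matrix with entries ψ_U(i, j) = Σ_{k : Fin s} v(i, k) · conj(v(j, k)) (the partial trace over the s-dimensional factor of the rank-one projector onto the Haar-random pure state U e₀). Then ∫ tr(ψ_U²) dμ(U) = (d + s)/(d·s + 1). -/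
/-!
Let `v = U e` be the column of a `μ`-random unitary and `M(a,b,c,d) = 𝔼[v_a v̄_b v_c v̄_d]`.
Left invariance gives `𝔼 f(Wv) = 𝔼 f(v)` for every unitary `W`. Diagonal phase unitaries kill
`M(a,b,c,d)` unless `{a,c} = {b,d}`; a Householder reflection whose `i`-th row is
`(3/5) e_i - (4/5) e_j` forces `𝔼|v_i|⁴ = 𝔼|v_j|⁴ = 2 𝔼|v_i|²|v_j|²`; and `∑ |v_a|² = 1` fixes the
constant, so `M(a,b,c,d) = (δ_ab δ_cd + δ_ad δ_cb) / (N(N+1))` with `N = ds`. Summing this over the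
expansion `tr ψ² = ∑ v_{ik} v̄_{jk} v_{jl} v̄_{il}` gives `(ds² + d²s) / (ds(ds+1))`.
-/

open MeasureTheory Matrix

/-- Borel measurable-space structure on the unitary group (as a subspace of matrices). -/
noncomputable instance unitaryGroupMeasurableSpace (n : Type*) [Fintype n] [DecidableEq n] :
    MeasurableSpace (Matrix.unitaryGroup n ℂ) := borel _

instance unitaryGroupBorelSpace (n : Type*) [Fintype n] [DecidableEq n] :
    BorelSpace (Matrix.unitaryGroup n ℂ) := ⟨rfl⟩

open ComplexConjugate

namespace Matrix

variable {n 𝕜 : Type*} [Fintype n] [DecidableEq n] [CommRing 𝕜] [StarRing 𝕜]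

theorem diagonal_mem_unitaryGroup {ζ : n → 𝕜} (hζ : ∀ i, star (ζ i) * ζ i = 1) :
    diagonal ζ ∈ unitaryGroup n 𝕜 := by
  rw [mem_unitaryGroup_iff', star_eq_conjTranspose, diagonal_conjTranspose, diagonal_mul_diagonal]
  simp [Pi.star_apply, hζ]

theorem one_sub_smul_vecMulVec_mem_unitaryGroup (u : n → 𝕜) {c : 𝕜} (hc : star c = c)
    (hcu : c * (star u ⬝ᵥ u) = 2) :
    1 - c • vecMulVec u (star u) ∈ unitaryGroup n 𝕜 := by
  rw [mem_unitaryGroup_iff', star_eq_conjTranspose, conjTranspose_sub, conjTranspose_one,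
    conjTranspose_smul, conjTranspose_vecMulVec, star_star, hc]
  have hsq : vecMulVec u (star u) * vecMulVec u (star u)
      = (star u ⬝ᵥ u) • vecMulVec u (star u) := by
    rw [vecMulVec_mul_vecMulVec, vecMulVec_smul]
  calc (1 - c • vecMulVec u (star u)) * (1 - c • vecMulVec u (star u))
      = 1 - (2 * c - c * (c * (star u ⬝ᵥ u))) • vecMulVec u (star u) := by
        simp only [sub_mul, mul_sub, one_mul, mul_one, smul_mul_smul_comm, hsq, smul_smul,
          sub_smul, two_mul, add_smul, mul_assoc]
        abel
    _ = 1 := by rw [hcu, mul_comm, sub_self, zero_smul, sub_zero]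

end Matrix

namespace HaarColumn

variable {n : Type*} [Fintype n] [DecidableEq n]

section Mixing

variable {i j : n}

noncomputable def mixingVec (i j : n) : n → ℂ := Pi.single i 1 + Pi.single j 2

theorem star_mixingVec_dotProduct (hij : i ≠ j) : star (mixingVec i j) ⬝ᵥ mixingVec i j = 5 := by
  simp [mixingVec, dotProduct, Pi.single_apply, add_mul, mul_add, Finset.sum_add_distrib, hij,
    hij.symm, map_ofNat]
  norm_num

/-- A Householder reflection rather than a rotation by `π / 4`, so that its entries are rational. -/
noncomputable def mixing (hij : i ≠ j) : unitaryGroup n ℂ :=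
  ⟨1 - (2 / 5 : ℂ) • vecMulVec (mixingVec i j) (star (mixingVec i j)),
    one_sub_smul_vecMulVec_mem_unitaryGroup _ (by simp)
      (by rw [star_mixingVec_dotProduct hij]; norm_num)⟩

theorem mixing_apply_row (hij : i ≠ j) (p : n) :
    mixing hij i p = (if p = i then 3 / 5 else 0) - (if p = j then 4 / 5 else 0) := by
  by_cases hpi : p = i
  · subst hpi
    simp [mixing, mixingVec, one_apply, vecMulVec_apply, hij]
    norm_num
  by_cases hpj : p = j
  · subst hpj
    simp [mixing, mixingVec, one_apply, vecMulVec_apply, hij, hij.symm]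
    norm_num
  simp [mixing, mixingVec, one_apply, vecMulVec_apply, hpi, hpj, Ne.symm hpi]

theorem conj_mixing_apply_row (hij : i ≠ j) (p : n) : conj (mixing hij i p) = mixing hij i p := by
  rw [mixing_apply_row]
  split_ifs <;> simp [map_ofNat]

theorem sum_mixing_mul (hij : i ≠ j) (g : n → ℂ) :
    ∑ p, mixing hij i p * g p = 3 / 5 * g i - 4 / 5 * g j := by
  simp [mixing_apply_row, sub_mul, Finset.sum_sub_distrib, ite_mul]

theorem sum_conj_mixing_mul (hij : i ≠ j) (g : n → ℂ) :
    ∑ p, conj (mixing hij i p) * g p = 3 / 5 * g i - 4 / 5 * g j := by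
  simp only [conj_mixing_apply_row]
  exact sum_mixing_mul hij g

end Mixing

def quartic (e a b c d : n) (U : Matrix n n ℂ) : ℂ :=
  U a e * conj (U b e) * U c e * conj (U d e)

variable (μ : Measure (unitaryGroup n ℂ)) (e : n)

noncomputable def moment (a b c d : n) : ℂ :=
  ∫ U, quartic e a b c d U ∂μ

theorem integrable_quartic [IsFiniteMeasure μ] (a b c d : n) :
    Integrable (fun U : unitaryGroup n ℂ => quartic e a b c d U) μ := by
  have hcont (i : n) : Continuous fun U : unitaryGroup n ℂ => (U : Matrix n n ℂ) i e :=
    (continuous_apply_apply i e).comp continuous_subtype_val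
  have hq : Continuous fun U : unitaryGroup n ℂ => quartic e a b c d U :=
    (((hcont a).mul (hcont b).star).mul (hcont c)).mul (hcont d).star
  refine .of_bound hq.aestronglyMeasurable 1 (.of_forall fun U => ?_)
  have h := fun i => entry_norm_bound_of_unitary U.2 i e
  calc ‖quartic e a b c d U‖ ≤ 1 * 1 * 1 * 1 := by
        simp only [quartic, norm_mul, Complex.norm_conj]
        gcongr <;> exact h _
    _ = 1 := by norm_num

theorem integral_sum_sum_quartic [IsFiniteMeasure μ] {ι : Type*} [Fintype ι]
    (a b c d : ι → ι → n) :
    ∫ U, ∑ x, ∑ y, quartic e (a x y) (b x y) (c x y) (d x y) U ∂μ =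
      ∑ x, ∑ y, moment μ e (a x y) (b x y) (c x y) (d x y) := by
  rw [integral_finsetSum _ fun x _ =>
    integrable_finsetSum _ fun y _ => integrable_quartic μ e _ _ _ _]
  congr 1 with x
  exact integral_finsetSum _ fun y _ => integrable_quartic μ e _ _ _ _

theorem moment_comm_left (a b c d : n) : moment μ e a b c d = moment μ e c b a d := by
  simp only [moment, quartic]
  congr 1 with U
  ring

theorem moment_comm_right (a b c d : n) : moment μ e a b c d = moment μ e a d c b := by
  simp only [moment, quartic]
  congr 1 with U
  ring

theorem moment_swap_pair (a c : n) : moment μ e c c a a = moment μ e a a c c :=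
  (moment_comm_left μ e c c a a).trans (moment_comm_right μ e a c c a)

theorem sum_moment_pair [IsProbabilityMeasure μ] : ∑ a, ∑ c, moment μ e a a c c = 1 := by
  have hcol (U : unitaryGroup n ℂ) : ∑ a, U a e * conj (U a e) = 1 := by
    have := congrFun (congrFun (UnitaryGroup.star_mul_self U) e) e
    simpa [mul_apply, star_apply, one_apply, mul_comm] using this
  rw [← integral_sum_sum_quartic μ e (fun a _ => a) (fun a _ => a) (fun _ c => c) (fun _ c => c)]
  calc ∫ U, ∑ a, ∑ c, quartic e a a c c U ∂μ = ∫ _, (1 : ℂ) ∂μ := by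
        congr 1 with U
        rw [← one_mul (1 : ℂ), ← hcol U, Finset.sum_mul_sum]
        simp only [quartic, mul_assoc]
    _ = 1 := by simp

variable [μ.IsMulLeftInvariant]

theorem moment_eq_integral_mul_left (W : unitaryGroup n ℂ) (a b c d : n) :
    moment μ e a b c d = ∫ U, quartic e a b c d (W.1 * U.1) ∂μ :=
  (integral_mul_left_eq_self (fun U : unitaryGroup n ℂ => quartic e a b c d U) W).symm

theorem moment_eq_phase_mul {ζ : n → ℂ} (hζ : ∀ i, star (ζ i) * ζ i = 1) (a b c d : n) :
    moment μ e a b c d = ζ a * conj (ζ b) * ζ c * conj (ζ d) * moment μ e a b c d := by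
  calc moment μ e a b c d = ∫ U, quartic e a b c d (diagonal ζ * U.1) ∂μ :=
        moment_eq_integral_mul_left μ e ⟨_, diagonal_mem_unitaryGroup hζ⟩ a b c d
    _ = ∫ U, ζ a * conj (ζ b) * ζ c * conj (ζ d) * quartic e a b c d U ∂μ := by
        congr 1 with U
        simp only [quartic, diagonal_mul, map_mul]
        ring
    _ = _ := integral_const_mul _ _

theorem moment_eq_zero_of_not_paired {a b c d : n} (h : ¬((a = b ∧ c = d) ∨ (a = d ∧ c = b))) :
    moment μ e a b c d = 0 := by
  let ζ (x p : n) : ℂ := if p = x then Complex.I else 1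
  have hζ (x p : n) : star (ζ x p) * ζ x p = 1 := by
    by_cases hp : p = x <;> simp [ζ, hp]
  -- The phase `I` at `x` multiplies the moment by `I ^ (#x in (a, c) - #x in (b, d))`.
  obtain ⟨x, hx⟩ : ∃ x, ζ x a * conj (ζ x b) * ζ x c * conj (ζ x d) ≠ 1 := by
    by_cases hab : a ≠ b ∧ a ≠ d
    · refine ⟨a, ?_⟩
      by_cases hca : c = a <;> norm_num [ζ, hab.1.symm, hab.2.symm, hca, Complex.ext_iff]
    · refine ⟨c, ?_⟩
      obtain ⟨rfl, hcd⟩ | ⟨rfl, hcb⟩ : (a = b ∧ c ≠ d) ∨ (a = d ∧ c ≠ b) := by tauto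
      · by_cases hac : a = c <;> norm_num [ζ, hac, Ne.symm hcd, Complex.ext_iff]
      · by_cases hac : a = c <;> norm_num [ζ, hac, Ne.symm hcb, Complex.ext_iff]
  exact (mul_left_eq_self₀.mp (moment_eq_phase_mul μ e (hζ x) a b c d).symm).resolve_left hx

theorem moment_eq_sum [IsFiniteMeasure μ] (W : unitaryGroup n ℂ) (a b c d : n) :
    moment μ e a b c d = ∑ p, W a p * ∑ q, conj (W b q) * ∑ r, W c r * ∑ t, conj (W d t) *
      moment μ e p q r t := by
  calc moment μ e a b c d = ∫ U, quartic e a b c d (W.1 * U.1) ∂μ :=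
        moment_eq_integral_mul_left μ e W a b c d
    _ = ∫ U, ∑ x : n × n × n × n, W a x.1 * conj (W b x.2.1) * W c x.2.2.1 *
          conj (W d x.2.2.2) * quartic e x.1 x.2.1 x.2.2.1 x.2.2.2 U ∂μ := by
        congr 1 with U
        have hterm (p q r t : n) : W a p * conj (W b q) * W c r * conj (W d t) *
            quartic e p q r t U =
              W a p * U p e * conj (W b q * U q e) * (W c r * U r e) * conj (W d t * U t e) := by
          simp only [quartic, map_mul]
          ring
        simp only [Fintype.sum_prod_type, hterm]
        simp only [← Finset.mul_sum, ← Finset.sum_mul]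
        simp only [quartic, mul_apply, map_sum]
    _ = ∑ x : n × n × n × n, W a x.1 * conj (W b x.2.1) * W c x.2.2.1 * conj (W d x.2.2.2) *
          moment μ e x.1 x.2.1 x.2.2.1 x.2.2.2 := by
        rw [integral_finsetSum _ fun x _ => (integrable_quartic μ e _ _ _ _).const_mul _]
        simp only [integral_const_mul, moment]
    _ = _ := by
        simp only [Fintype.sum_prod_type, Finset.mul_sum, mul_assoc]

/-- `81 = 3⁴`, `256 = 4⁴` and `576 = 4 · 3² · 4²` count the paired terms of `|3x - 4y|⁴`. -/
theorem moment_mixing [IsFiniteMeasure μ] {i j : n} (hij : i ≠ j) :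
    625 * moment μ e i i i i =
      81 * moment μ e i i i i + 256 * moment μ e j j j j + 576 * moment μ e i i j j := by
  have h := moment_eq_sum μ e (mixing hij) i i i i
  simp only [sum_mixing_mul, sum_conj_mixing_mul] at h
  simp (disch := simp [hij, hij.symm]) only [moment_eq_zero_of_not_paired μ e] at h
  have h₁ : moment μ e i j j i = moment μ e i i j j := moment_comm_right μ e i j j i
  have h₂ : moment μ e j j i i = moment μ e i i j j := moment_swap_pair μ e i j
  have h₃ : moment μ e j i i j = moment μ e i i j j := (moment_comm_right μ e j i i j).trans h₂
  simp only [h₁, h₂, h₃] at h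
  linear_combination 625 * h

theorem moment_diag_eq_of_ne [IsFiniteMeasure μ] {i j : n} (hij : i ≠ j) :
    moment μ e j j j j = moment μ e i i i i ∧ 2 * moment μ e i i j j = moment μ e i i i i := by
  have hi := moment_mixing μ e hij
  have hj := moment_mixing μ e hij.symm
  rw [moment_swap_pair μ e i j] at hj
  constructor
  · linear_combination (hj - hi) / 800
  · linear_combination -(hi + 8 * (hj - hi) / 25) / 288

theorem moment_pair_eq_half_mul [IsFiniteMeasure μ] (a x y : n) :
    moment μ e x x y y = moment μ e a a a a / 2 * (1 + if x = y then 1 else 0) := by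
  have hdiag (x : n) : moment μ e x x x x = moment μ e a a a a := by
    by_cases hx : a = x
    · rw [hx]
    · exact (moment_diag_eq_of_ne μ e hx).1
  by_cases hxy : x = y
  · subst hxy
    rw [hdiag, if_pos rfl]
    ring
  · rw [if_neg hxy, ← hdiag x, ← (moment_diag_eq_of_ne μ e hxy).2]
    ring

theorem moment_pair_eq [IsProbabilityMeasure μ] (x y : n) :
    moment μ e x x y y =
      (1 + if x = y then 1 else 0) / (Fintype.card n * (Fintype.card n + 1)) := by
  have hsum := sum_moment_pair μ e
  rw [Finset.sum_congr rfl fun x _ => Finset.sum_congr rfl fun y _ =>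
    moment_pair_eq_half_mul μ e e x y] at hsum
  simp only [← Finset.mul_sum, Finset.sum_add_distrib, Finset.sum_const, Finset.card_univ,
    nsmul_eq_mul, mul_one, Finset.sum_ite_eq, Finset.mem_univ, if_true] at hsum
  have hN : (Fintype.card n : ℂ) * (Fintype.card n + 1) ≠ 0 :=
    mul_ne_zero (Nat.cast_ne_zero.mpr (Fintype.card_pos_iff.mpr ⟨e⟩).ne')
      (Nat.cast_add_one_ne_zero _)
  rw [moment_pair_eq_half_mul μ e e x y, eq_div_iff hN]
  linear_combination (1 + if x = y then (1 : ℂ) else 0) * hsum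

theorem moment_eq [IsProbabilityMeasure μ] (a b c d : n) :
    moment μ e a b c d =
      ((if a = b ∧ c = d then 1 else 0) + (if a = d ∧ c = b then 1 else 0)) /
        (Fintype.card n * (Fintype.card n + 1)) := by
  by_cases hp : a = b ∧ c = d
  · obtain ⟨rfl, rfl⟩ := hp
    by_cases hac : a = c
    · subst hac
      simp [moment_pair_eq]
    · simp [moment_pair_eq, hac]
  by_cases hq : a = d ∧ c = b
  · obtain ⟨rfl, rfl⟩ := hq
    have hac : a ≠ c := fun h => hp ⟨h, h.symm⟩
    rw [moment_comm_right, moment_pair_eq]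
    simp [hac]
  · rw [moment_eq_zero_of_not_paired μ e (by tauto)]
    simp [hp, hq]

end HaarColumn

section ReducedState

variable {m k : Type*} [Fintype m] [Fintype k]

/-- The partial trace over `k` of the rank-one operator `v v*`. -/
def reducedState (v : m × k → ℂ) : Matrix m m ℂ :=
  of fun i j => ∑ l, v (i, l) * conj (v (j, l))

theorem trace_reducedState_mul_self (v : m × k → ℂ) :
    trace (reducedState v * reducedState v) =
      ∑ a : m × k, ∑ c : m × k, v a * conj (v (c.1, a.2)) * v c * conj (v (a.1, c.2)) := by
  simp only [trace, diag, mul_apply, reducedState, of_apply, Finset.sum_mul_sum,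
    Fintype.sum_prod_type, mul_assoc]
  exact Finset.sum_congr rfl fun i _ => Finset.sum_comm

variable [DecidableEq m] [DecidableEq k] (μ : Measure (unitaryGroup (m × k) ℂ))
  [IsProbabilityMeasure μ] [μ.IsMulLeftInvariant] (e : m × k)

open HaarColumn

theorem sum_moment_reducedState :
    ∑ a, ∑ c, moment μ e a (c.1, a.2) c (a.1, c.2) =
      (((Fintype.card m + Fintype.card k) / (Fintype.card m * Fintype.card k + 1) : ℝ) : ℂ) := by
  have hM (i : m) (r : k) (j : m) (t : k) :
      moment μ e (i, r) (j, r) (j, t) (i, t) =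
        ((if i = j then 1 else 0) + (if r = t then 1 else 0)) /
          (Fintype.card (m × k) * (Fintype.card (m × k) + 1)) := by
    rw [moment_eq]
    congr 3 <;> simp [eq_comm]
  simp only [Fintype.sum_prod_type]
  simp only [hM, ← Finset.sum_div, Finset.sum_add_distrib]
  simp only [Finset.sum_const, Finset.card_univ, Finset.sum_ite_eq, Finset.mem_univ, if_true,
    nsmul_eq_mul, mul_one, mul_ite, mul_zero, Fintype.card_prod]
  have hm : (Fintype.card m : ℂ) ≠ 0 := Nat.cast_ne_zero.mpr (Fintype.card_pos_iff.mpr ⟨e.1⟩).ne'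
  have hk : (Fintype.card k : ℂ) ≠ 0 := Nat.cast_ne_zero.mpr (Fintype.card_pos_iff.mpr ⟨e.2⟩).ne'
  have hmk : (Fintype.card m * Fintype.card k + 1 : ℂ) ≠ 0 := by
    exact_mod_cast Nat.succ_ne_zero (Fintype.card m * Fintype.card k)
  push_cast
  field_simp
  ring

theorem integral_re_trace_reducedState_mul_self :
    ∫ U, (trace (reducedState (fun p => U p e) * reducedState (fun p => U p e))).re ∂μ =
      (Fintype.card m + Fintype.card k) / (Fintype.card m * Fintype.card k + 1) := by
  have hI : Integrable (fun U : unitaryGroup (m × k) ℂ =>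
      ∑ a, ∑ c, quartic e a (c.1, a.2) c (a.1, c.2) U) μ :=
    integrable_finsetSum _ fun a _ =>
      integrable_finsetSum _ fun c _ => integrable_quartic μ e _ _ _ _
  have h := integral_re (𝕜 := ℂ) hI
  simp only [RCLike.re_to_complex, integral_sum_sum_quartic, sum_moment_reducedState,
    Complex.ofReal_re] at h
  simpa only [trace_reducedState_mul_self, quartic] using h

end ReducedState

/-- The Haar probability measure is encoded as an arbitrary left-invariant Borel probability
measure `μ` on the unitary group (such a measure is unique, and is the Haar measure). -/
theorem stmt_3 (d s : ℕ) (hd : 0 < d) (hs : 0 < s)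
    (μ : Measure (Matrix.unitaryGroup (Fin d × Fin s) ℂ))
    [IsProbabilityMeasure μ] [μ.IsMulLeftInvariant]
    (e₀ : Fin d × Fin s → ℂ)
    (he₀ : e₀ = fun p => if p = (⟨0, hd⟩, ⟨0, hs⟩) then 1 else 0)
    (ψ : Matrix.unitaryGroup (Fin d × Fin s) ℂ → Matrix (Fin d) (Fin d) ℂ)
    (hψ : ∀ U i j, ψ U i j =
      ∑ k : Fin s,
        ((U : Matrix (Fin d × Fin s) (Fin d × Fin s) ℂ).mulVec e₀ (i, k)) *
          (starRingEnd ℂ) ((U : Matrix (Fin d × Fin s) (Fin d × Fin s) ℂ).mulVec e₀ (j, k))) :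
    ∫ U, (Matrix.trace (ψ U * ψ U)).re ∂μ = ((d : ℝ) + s) / ((d : ℝ) * s + 1) := by
  have he : e₀ = Pi.single (⟨0, hd⟩, ⟨0, hs⟩) 1 := by
    rw [he₀]
    funext p
    simp [Pi.single_apply]
  have hψ' (U : unitaryGroup (Fin d × Fin s) ℂ) :
      ψ U = reducedState (fun p => U p (⟨0, hd⟩, ⟨0, hs⟩)) := by
    ext i j
    simp [hψ, he, reducedState]
  simp only [hψ']
  simpa using integral_re_trace_reducedState_mul_self μ (⟨0, hd⟩, ⟨0, hs⟩)
end

section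
/- Let d, T ≥ 1 be natural numbers and ε > 0 a real number such that T < √d/(100 ε) and 1/ε < √d. Let x = (x₁, …, x_T) be drawn from the uniform distribution on (Fin T → Fin d). Define X(x) = #{(i, j) : i < j and x_i = x_j} and Y(x) = #{(i, j, k) : i < j < k and x_i = x_j = x_k}. Then with probability at least 97/100, (ε − ε²/2)·X(x) − (ε/d)·(T choose 2) − ε²·Y(x) ≥ −13/100. -/
/-! For sorted pairs `p ≠ q` the collision events `x p.1 = x p.2` and `x q.1 = x q.2` are
independent, each of probability `1/d`. Hence `X` has mean `μ = (T choose 2)/d` and variance at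
most `μ`, while `𝔼 Y ≤ T³/d²`. The statistic equals `ε (X - μ) - ε² (X/2 + Y)`: by Chebyshev the
first term is below `-6/100` with probability at most `ε²μ/0.06² < 1/72`, and by Markov the second
exceeds `7/100` with probability below `1/2000`, because `100 ε T < √d` and `1 < ε √d` give
`ε²T² < d/10⁴` and `ε²T³ < d²/10⁶`. -/

open Finset
open scoped Classical

section Events

variable {Ω R : Type*} [Fintype Ω]

theorem card_filter_mul_le_sum (g : Ω → ℝ) (hg : ∀ ω, 0 ≤ g ω) (t : ℝ) :
    #{ω | t ≤ g ω} * t ≤ ∑ ω, g ω :=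
  calc #{ω | t ≤ g ω} * t = ∑ ω ∈ {ω | t ≤ g ω}, t := by simp
    _ ≤ ∑ ω ∈ {ω | t ≤ g ω}, g ω := sum_le_sum fun ω hω => (mem_filter.1 hω).2
    _ ≤ ∑ ω, g ω := sum_le_sum_of_subset_of_nonneg (subset_univ _) fun ω _ _ => hg ω

theorem sum_sq_sum_eq_sum_sum_sq {κ : Type*} [CommSemiring R] (s : Finset κ) (f : κ → Ω → R)
    (h : ∀ p ∈ s, ∀ q ∈ s, p ≠ q → ∑ ω, f p ω * f q ω = 0) :
    ∑ ω, (∑ p ∈ s, f p ω) ^ 2 = ∑ p ∈ s, ∑ ω, f p ω ^ 2 := by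
  simp_rw [sq, sum_mul_sum]
  rw [sum_comm]
  refine sum_congr rfl fun p hp => ?_
  rw [sum_comm, sum_eq_single_of_mem p hp fun q hq hqp => h p hp q hq hqp.symm]

theorem card_le_card_filter_add_card_add_card (G : Ω → Prop) [DecidablePred G]
    (B₁ B₂ : Finset Ω) (h : ∀ ω, ω ∉ B₁ → ω ∉ B₂ → G ω) :
    Fintype.card Ω ≤ #{ω | G ω} + #B₁ + #B₂ := by
  refine (card_le_card fun ω _ => ?_).trans ((card_union_le _ _).trans
    (add_le_add_left (card_union_le _ _) _))
  by_cases h₁ : ω ∈ B₁ <;> by_cases h₂ : ω ∈ B₂ <;> simp_all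

variable [DecidableEq Ω]

theorem sum_indicator_sub_mul_indicator_sub (A B : Finset Ω) (a b : ℝ) :
    ∑ ω, ((if ω ∈ A then 1 else 0) - a) * ((if ω ∈ B then 1 else 0) - b : ℝ) =
      #(A ∩ B) - b * #A - a * #B + Fintype.card Ω * (a * b) := by
  have hexp : ∀ ω, ((if ω ∈ A then 1 else 0) - a) * ((if ω ∈ B then 1 else 0) - b : ℝ) =
      (if ω ∈ A ∩ B then 1 else 0) - b * (if ω ∈ A then 1 else 0)
        - a * (if ω ∈ B then 1 else 0) + a * b := by
    intro ω
    by_cases hA : ω ∈ A <;> by_cases hB : ω ∈ B <;> simp [hA, hB] <;> ring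
  simp only [hexp, sum_add_distrib, sum_sub_distrib, ← mul_sum, sum_boole, sum_const, card_univ,
    filter_mem_eq_inter, univ_inter, nsmul_eq_mul]
  ring

theorem sum_centered_indicator_mul_eq_zero {A B : Finset Ω}
    (h : #(A ∩ B) * Fintype.card Ω = #A * #B) :
    ∑ ω, ((if ω ∈ A then 1 else 0) - #A / Fintype.card Ω) *
      ((if ω ∈ B then 1 else 0) - #B / Fintype.card Ω : ℝ) = 0 := by
  rw [sum_indicator_sub_mul_indicator_sub]
  rcases (Fintype.card Ω).eq_zero_or_pos with hΩ | hΩ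
  · have := Fintype.card_eq_zero_iff.1 hΩ
    simp [eq_empty_of_isEmpty]
  · have hN : (Fintype.card Ω : ℝ) ≠ 0 := by positivity
    have hAB : (#(A ∩ B) : ℝ) = #A * #B / Fintype.card Ω := by
      rw [eq_div_iff hN]; exact_mod_cast h
    rw [hAB]
    field_simp
    ring

theorem sum_centered_indicator_sq_le (A : Finset Ω) :
    ∑ ω, ((if ω ∈ A then 1 else 0) - #A / Fintype.card Ω : ℝ) ^ 2 ≤ #A := by
  simp_rw [sq]
  rw [sum_indicator_sub_mul_indicator_sub, inter_self]
  rcases (Fintype.card Ω).eq_zero_or_pos with hΩ | hΩ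
  · have := Fintype.card_eq_zero_iff.1 hΩ
    simp [eq_empty_of_isEmpty]
  · have hN : (0 : ℝ) < Fintype.card Ω := by positivity
    field_simp
    nlinarith [sq_nonneg (#A : ℝ)]

end Events

section Collisions

variable {ι α : Type*} [Fintype ι] [Fintype α] [DecidableEq α]

section

variable [DecidableEq ι]

theorem card_filter_and_apply_eq_mul_card (P : (ι → α) → Prop) [DecidablePred P] {i j : ι}
    (hij : i ≠ j) (hP : ∀ x a, P (Function.update x i a) ↔ P x) :
    #{x | P x ∧ x i = x j} * Fintype.card α = #{x | P x} := by
  rw [← card_univ, ← card_product]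
  refine card_nbij' (fun y => Function.update y.1 i y.2) (fun x => (Function.update x i (x j), x i))
    ?_ ?_ ?_ ?_
  · rintro ⟨y, a⟩ hy
    simp_all
  · intro x hx
    simp_all [Ne.symm hij]
  · rintro ⟨y, a⟩ hy
    simp_all [Ne.symm hij]
  · intro x _
    simp

theorem card_filter_apply_eq_apply_mul_card {i j : ι} (hij : i ≠ j) :
    #{x : ι → α | x i = x j} * Fintype.card α = Fintype.card α ^ Fintype.card ι := by
  simpa using card_filter_and_apply_eq_mul_card (α := α) (fun _ => True) hij (by simp)

theorem card_filter_apply_eq_apply_and_mul_card_sq {i j k l : ι} (hij : i ≠ j) (hkl : k ≠ l)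
    (hik : i ≠ k) (hil : i ≠ l) :
    #{x : ι → α | x k = x l ∧ x i = x j} * Fintype.card α ^ 2 =
      Fintype.card α ^ Fintype.card ι := by
  rw [sq, ← mul_assoc, card_filter_and_apply_eq_mul_card (fun x => x k = x l) hij
    (by simp [hik.symm, hil.symm]), card_filter_apply_eq_apply_mul_card hkl]

theorem card_filter_apply_eq_apply_eq_apply_mul_card_sq {i j k : ι} (hij : i ≠ j) (hjk : j ≠ k)
    (hik : i ≠ k) :
    #{x : ι → α | x i = x j ∧ x j = x k} * Fintype.card α ^ 2 =
      Fintype.card α ^ Fintype.card ι := by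
  rw [filter_congr fun x _ => and_congr_right' eq_comm]
  exact card_filter_apply_eq_apply_and_mul_card_sq hjk.symm hij hik.symm hjk.symm

end

variable [LinearOrder ι]

theorem card_filter_apply_eq_apply_and_mul_card_sq_of_lt {p q : ι × ι} (hp : p.1 < p.2)
    (hq : q.1 < q.2) (hpq : p ≠ q) :
    #{x : ι → α | x q.1 = x q.2 ∧ x p.1 = x p.2} * Fintype.card α ^ 2 =
      Fintype.card α ^ Fintype.card ι := by
  -- Some endpoint of `p` is not an endpoint of `q`, so its coordinate is free given `x q.1 = x q.2`.
  by_cases h₁ : p.1 = q.1 ∨ p.1 = q.2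
  · have h₂ : p.2 ≠ q.1 ∧ p.2 ≠ q.2 := by
      obtain ⟨p₁, p₂⟩ := p
      obtain ⟨q₁, q₂⟩ := q
      simp only [ne_eq, Prod.mk.injEq] at *
      constructor <;> rintro rfl <;> rcases h₁ with rfl | rfl <;> first | order | simp_all
    rw [filter_congr fun x _ => and_congr_right' eq_comm]
    exact card_filter_apply_eq_apply_and_mul_card_sq hp.ne' hq.ne h₂.1 h₂.2
  · push Not at h₁
    exact card_filter_apply_eq_apply_and_mul_card_sq hp.ne hq.ne h₁.1 h₁.2

def pairCollisions (x : ι → α) : ℕ := #{p : ι × ι | p.1 < p.2 ∧ x p.1 = x p.2}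

def tripleCollisions (x : ι → α) : ℕ :=
  #{t : ι × ι × ι | t.1 < t.2.1 ∧ t.2.1 < t.2.2 ∧ x t.1 = x t.2.1 ∧ x t.2.1 = x t.2.2}

theorem sum_pairCollisions_eq_sum_card :
    ∑ x : ι → α, pairCollisions x =
      ∑ p ∈ ({p | p.1 < p.2} : Finset (ι × ι)), #{x : ι → α | x p.1 = x p.2} := by
  simp only [pairCollisions, ← filter_filter]
  exact sum_card_bipartiteAbove_eq_sum_card_bipartiteBelow fun (x : ι → α) (p : ι × ι) =>
    x p.1 = x p.2

theorem sum_tripleCollisions_eq_sum_card :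
    ∑ x : ι → α, tripleCollisions x =
      ∑ t ∈ ({t | t.1 < t.2.1 ∧ t.2.1 < t.2.2} : Finset (ι × ι × ι)),
        #{x : ι → α | x t.1 = x t.2.1 ∧ x t.2.1 = x t.2.2} := by
  have h (x : ι → α) : tripleCollisions x = #{t ∈ ({t | t.1 < t.2.1 ∧ t.2.1 < t.2.2} :
      Finset (ι × ι × ι)) | x t.1 = x t.2.1 ∧ x t.2.1 = x t.2.2} := by
    rw [filter_filter, tripleCollisions]
    simp only [and_assoc]
  simp only [h]
  exact sum_card_bipartiteAbove_eq_sum_card_bipartiteBelow fun (x : ι → α) (t : ι × ι × ι) =>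
    x t.1 = x t.2.1 ∧ x t.2.1 = x t.2.2

variable [Nonempty α]

theorem card_filter_apply_eq_apply_eq_div {i j : ι} (hij : i ≠ j) :
    (#{x : ι → α | x i = x j} : ℝ) = Fintype.card (ι → α) / Fintype.card α := by
  rw [eq_div_iff (by positivity), Fintype.card_fun]
  exact_mod_cast card_filter_apply_eq_apply_mul_card hij

theorem card_filter_apply_eq_apply_eq_apply_eq_div {i j k : ι} (hij : i ≠ j) (hjk : j ≠ k)
    (hik : i ≠ k) :
    (#{x : ι → α | x i = x j ∧ x j = x k} : ℝ) = Fintype.card (ι → α) / Fintype.card α ^ 2 := by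
  rw [eq_div_iff (by positivity), Fintype.card_fun]
  exact_mod_cast card_filter_apply_eq_apply_eq_apply_mul_card_sq hij hjk hik

theorem card_filter_apply_eq_apply_inter_mul_card {p q : ι × ι} (hp : p.1 < p.2)
    (hq : q.1 < q.2) (hpq : p ≠ q) :
    #(({x | x p.1 = x p.2} : Finset (ι → α)) ∩ ({x | x q.1 = x q.2} : Finset (ι → α))) *
      Fintype.card (ι → α) =
      #{x : ι → α | x p.1 = x p.2} * #{x : ι → α | x q.1 = x q.2} := by
  rw [← filter_and]
  refine Nat.eq_of_mul_eq_mul_right (pow_pos Fintype.card_pos 2 : 0 < Fintype.card α ^ 2) ?_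
  calc _ = #{x : ι → α | x p.1 = x p.2 ∧ x q.1 = x q.2} * Fintype.card α ^ 2 *
        Fintype.card (ι → α) := by ring
    _ = #{x : ι → α | x p.1 = x p.2} * Fintype.card α *
        (#{x : ι → α | x q.1 = x q.2} * Fintype.card α) := by
      rw [card_filter_apply_eq_apply_and_mul_card_sq_of_lt hq hp hpq.symm,
        card_filter_apply_eq_apply_mul_card hp.ne, card_filter_apply_eq_apply_mul_card hq.ne,
        Fintype.card_fun]
    _ = _ := by ring

theorem sum_pairCollisions :
    ∑ x : ι → α, (pairCollisions x : ℝ) =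
      Fintype.card (ι → α) * ((Fintype.card ι).choose 2 / Fintype.card α) := by
  rw [← Nat.cast_sum, sum_pairCollisions_eq_sum_card, Nat.cast_sum,
    sum_congr rfl fun p hp => card_filter_apply_eq_apply_eq_div (mem_filter.1 hp).2.ne, sum_const,
    Fintype.card_product_filter_lt, nsmul_eq_mul]
  ring

theorem sum_sq_pairCollisions_sub_le :
    ∑ x : ι → α, ((pairCollisions x : ℝ) - (Fintype.card ι).choose 2 / Fintype.card α) ^ 2 ≤
      Fintype.card (ι → α) * ((Fintype.card ι).choose 2 / Fintype.card α) := by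
  set P₂ : Finset (ι × ι) := {p | p.1 < p.2}
  set A : ι × ι → Finset (ι → α) := fun p => {x | x p.1 = x p.2}
  have hN : (Fintype.card (ι → α) : ℝ) ≠ 0 := by positivity
  have hA : ∀ p ∈ P₂, (#(A p) : ℝ) / Fintype.card (ι → α) = 1 / Fintype.card α := fun p hp => by
    rw [card_filter_apply_eq_apply_eq_div (mem_filter.1 hp).2.ne]
    field_simp
  have hindep : ∀ p ∈ P₂, ∀ q ∈ P₂, p ≠ q →
      #(A p ∩ A q) * Fintype.card (ι → α) = #(A p) * #(A q) := fun p hp q hq hpq =>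
    card_filter_apply_eq_apply_inter_mul_card (mem_filter.1 hp).2 (mem_filter.1 hq).2 hpq
  have hcentered : ∀ x, (pairCollisions x : ℝ) - (Fintype.card ι).choose 2 / Fintype.card α =
      ∑ p ∈ P₂, ((if x ∈ A p then 1 else 0 : ℝ) - #(A p) / Fintype.card (ι → α)) := fun x => by
    rw [sum_sub_distrib, sum_boole, sum_congr rfl hA, sum_const, Fintype.card_product_filter_lt,
      nsmul_eq_mul, filter_filter]
    simp [A, pairCollisions, div_eq_mul_inv]
  calc ∑ x : ι → α, ((pairCollisions x : ℝ) - (Fintype.card ι).choose 2 / Fintype.card α) ^ 2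
      = ∑ p ∈ P₂, ∑ x, ((if x ∈ A p then 1 else 0) - #(A p) / Fintype.card (ι → α) : ℝ) ^ 2 := by
        simp_rw [hcentered]
        exact sum_sq_sum_eq_sum_sum_sq _ _ fun p hp q hq hpq =>
          sum_centered_indicator_mul_eq_zero (hindep p hp q hq hpq)
    _ ≤ ∑ p ∈ P₂, (#(A p) : ℝ) := sum_le_sum fun p _ => sum_centered_indicator_sq_le _
    _ = Fintype.card (ι → α) * ((Fintype.card ι).choose 2 / Fintype.card α) := by
      rw [← Nat.cast_sum, ← sum_pairCollisions_eq_sum_card, Nat.cast_sum, sum_pairCollisions]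

theorem sum_tripleCollisions_le :
    ∑ x : ι → α, (tripleCollisions x : ℝ) ≤
      Fintype.card (ι → α) * (Fintype.card ι ^ 3 / Fintype.card α ^ 2) := by
  set T₃ : Finset (ι × ι × ι) := {t | t.1 < t.2.1 ∧ t.2.1 < t.2.2}
  have hT₃ : (#T₃ : ℝ) ≤ Fintype.card ι ^ 3 := by
    exact_mod_cast (card_le_univ T₃).trans_eq (by simp [pow_succ, mul_assoc])
  rw [← Nat.cast_sum, sum_tripleCollisions_eq_sum_card, Nat.cast_sum,
    sum_congr rfl fun t ht => card_filter_apply_eq_apply_eq_apply_eq_div (mem_filter.1 ht).2.1.ne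
      (mem_filter.1 ht).2.2.ne ((mem_filter.1 ht).2.1.trans (mem_filter.1 ht).2.2).ne,
    sum_const, nsmul_eq_mul]
  exact (mul_le_mul_of_nonneg_right hT₃ (by positivity)).trans_eq (by ring)

theorem card_filter_le_sq_mul_pairCollisions_sub_mul_le (ε t : ℝ) :
    #{x : ι → α | t ≤ (ε * ((pairCollisions x : ℝ) -
        (Fintype.card ι).choose 2 / Fintype.card α)) ^ 2} * t ≤
      ε ^ 2 * (Fintype.card (ι → α) * ((Fintype.card ι).choose 2 / Fintype.card α)) := by
  refine (card_filter_mul_le_sum _ (fun x => sq_nonneg _) t).trans ?_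
  simp_rw [mul_pow, ← mul_sum]
  exact mul_le_mul_of_nonneg_left sum_sq_pairCollisions_sub_le (sq_nonneg ε)

theorem card_filter_le_sq_mul_collisions_mul_le (ε t : ℝ) :
    #{x : ι → α | t ≤ ε ^ 2 * ((pairCollisions x : ℝ) / 2 + tripleCollisions x)} * t ≤
      ε ^ 2 * (Fintype.card (ι → α) * ((Fintype.card ι).choose 2 / Fintype.card α) / 2 +
        Fintype.card (ι → α) * (Fintype.card ι ^ 3 / Fintype.card α ^ 2)) := by
  refine (card_filter_mul_le_sum _ (fun x => by positivity) t).trans ?_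
  rw [← mul_sum, sum_add_distrib, ← sum_div, sum_pairCollisions]
  gcongr
  exact sum_tripleCollisions_le

theorem card_filter_collision_statistic_ge {ε : ℝ}
    (h₂ : ε ^ 2 * Fintype.card ι ^ 2 < Fintype.card α / 10 ^ 4)
    (h₃ : ε ^ 2 * Fintype.card ι ^ 3 < Fintype.card α ^ 2 / 10 ^ 6) :
    (97 / 100 : ℝ) * Fintype.card (ι → α) ≤
      #{x : ι → α | (ε - ε ^ 2 / 2) * (pairCollisions x : ℝ) -
        ε / Fintype.card α * (Fintype.card ι).choose 2 - ε ^ 2 * tripleCollisions x ≥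
          -(13 / 100)} := by
  set n : ℝ := (Fintype.card ι : ℝ)
  set d : ℝ := (Fintype.card α : ℝ)
  set N : ℝ := (Fintype.card (ι → α) : ℝ)
  set M : ℝ := ((Fintype.card ι).choose 2 : ℝ)
  have hd : 0 < d := by positivity
  have hN : 0 < N := by positivity
  have hM : M ≤ n ^ 2 / 2 := by simpa using Nat.choose_le_pow_div (α := ℝ) 2 (Fintype.card ι)
  have hεM : ε ^ 2 * M ≤ d / 20000 := by nlinarith
  set B₁ : Finset (ι → α) := {x | (6 / 100) ^ 2 ≤ (ε * ((pairCollisions x : ℝ) - M / d)) ^ 2}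
  set B₂ : Finset (ι → α) := {x | 7 / 100 ≤ ε ^ 2 * ((pairCollisions x : ℝ) / 2 + tripleCollisions x)}
  have hB₁ : #B₁ * (6 / 100) ^ 2 ≤ N / 20000 := by
    refine (card_filter_le_sq_mul_pairCollisions_sub_mul_le ε _).trans ?_
    calc ε ^ 2 * (N * (M / d)) = N * (ε ^ 2 * M) / d := by ring
      _ ≤ N * (d / 20000) / d := by gcongr
      _ = N / 20000 := by field_simp
  have hB₂ : #B₂ * (7 / 100) ≤ N * (1 / 40000 + 1 / 10 ^ 6) := by
    refine (card_filter_le_sq_mul_collisions_mul_le ε _).trans ?_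
    calc ε ^ 2 * (N * (M / d) / 2 + N * (n ^ 3 / d ^ 2))
        = N * (ε ^ 2 * M / d / 2 + ε ^ 2 * n ^ 3 / d ^ 2) := by ring
      _ ≤ N * (d / 20000 / d / 2 + d ^ 2 / 10 ^ 6 / d ^ 2) := by gcongr
      _ = N * (1 / 40000 + 1 / 10 ^ 6) := by field_simp; norm_num
  have hcover := card_le_card_filter_add_card_add_card (fun x : ι → α =>
    (ε - ε ^ 2 / 2) * (pairCollisions x : ℝ) - ε / d * M - ε ^ 2 * tripleCollisions x ≥ -(13 / 100))
    B₁ B₂ fun x hx₁ hx₂ => by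
      simp only [B₁, B₂, mem_filter, mem_univ, true_and, not_le] at hx₁ hx₂
      have hdev := neg_lt_of_abs_lt (abs_lt_of_sq_lt_sq hx₁ (by norm_num))
      calc (ε - ε ^ 2 / 2) * (pairCollisions x : ℝ) - ε / d * M - ε ^ 2 * tripleCollisions x
          = ε * ((pairCollisions x : ℝ) - M / d) -
            ε ^ 2 * ((pairCollisions x : ℝ) / 2 + tripleCollisions x) := by ring
        _ ≥ -(13 / 100) := by linarith
  have hcover' : N ≤ _ := Nat.cast_le (α := ℝ).2 hcover
  push_cast at hcover'
  linarith

end Collisions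

theorem collision_parameter_bounds {d T ε : ℝ} (hε : 0 < ε) (hT : 0 ≤ T)
    (hTd : T < √d / (100 * ε)) (hεd : 1 / ε < √d) :
    ε ^ 2 * T ^ 2 < d / 10 ^ 4 ∧ ε ^ 2 * T ^ 3 < d ^ 2 / 10 ^ 6 := by
  have hs : 0 < √d := (one_div_pos.2 hε).trans hεd
  have hd : √d ^ 2 = d := Real.sq_sqrt (Real.sqrt_pos.1 hs).le
  have hTs : 100 * ε * T < √d := by rwa [lt_div_iff₀ (by positivity), mul_comm] at hTd
  have hεs : 1 < ε * √d := by rwa [div_lt_iff₀ hε, mul_comm] at hεd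
  have hTs₃ : (100 * ε * T) ^ 3 < √d ^ 3 := pow_lt_pow_left₀ hTs (by positivity) (by norm_num)
  constructor
  · nlinarith [pow_lt_pow_left₀ hTs (by positivity) two_ne_zero]
  · nlinarith

theorem stmt_5_general (d T : ℕ) (hd : 1 ≤ d) (ε : ℝ) (hε : 0 < ε)
    (hTd : (T : ℝ) < Real.sqrt d / (100 * ε)) (hεd : 1 / ε < Real.sqrt d)
    (X Y : (Fin T → Fin d) → ℕ)
    (hX : ∀ x, X x = (Finset.univ.filter
      (fun p : Fin T × Fin T => p.1 < p.2 ∧ x p.1 = x p.2)).card)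
    (hY : ∀ x, Y x = (Finset.univ.filter
      (fun p : Fin T × Fin T × Fin T =>
        p.1 < p.2.1 ∧ p.2.1 < p.2.2 ∧ x p.1 = x p.2.1 ∧ x p.2.1 = x p.2.2)).card) :
    (97 : ℝ) / 100 ≤
      ((Finset.univ.filter (fun x : Fin T → Fin d =>
          (ε - ε ^ 2 / 2) * (X x : ℝ) - (ε / d) * (T.choose 2 : ℝ) - ε ^ 2 * (Y x : ℝ)
            ≥ -(13 / 100))).card : ℝ) / (Fintype.card (Fin T → Fin d) : ℝ) := by
  have : Nonempty (Fin d) := ⟨⟨0, hd⟩⟩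
  obtain ⟨h₂, h₃⟩ := collision_parameter_bounds hε (Nat.cast_nonneg T) hTd hεd
  obtain rfl : X = pairCollisions := funext hX
  obtain rfl : Y = tripleCollisions := funext hY
  rw [le_div_iff₀ (by positivity)]
  simpa only [Fintype.card_fin] using card_filter_collision_statistic_ge (ι := Fin T) (α := Fin d)
    (by simpa only [Fintype.card_fin] using h₂) (by simpa only [Fintype.card_fin] using h₃)

/-- Counting argument for the improved purity-estimation lower bound: if `T < √d/(100ε)`
and `1/ε < √d`, then for `x₁, …, x_T` drawn uniformly from a set of size `d`, with
probability at least `97/100` we have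
`(ε − ε²/2)·X(x) − (ε/d)·(T choose 2) − ε²·Y(x) ≥ −13/100`, where `X` counts collision
pairs and `Y` counts collision triples. -/
theorem stmt_5 (d T : ℕ) (hd : 1 ≤ d) (hT : 1 ≤ T) (ε : ℝ) (hε : 0 < ε)
    (hTd : (T : ℝ) < Real.sqrt d / (100 * ε)) (hεd : 1 / ε < Real.sqrt d)
    (X Y : (Fin T → Fin d) → ℕ)
    (hX : ∀ x, X x = (Finset.univ.filter
      (fun p : Fin T × Fin T => p.1 < p.2 ∧ x p.1 = x p.2)).card)
    (hY : ∀ x, Y x = (Finset.univ.filter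
      (fun p : Fin T × Fin T × Fin T =>
        p.1 < p.2.1 ∧ p.2.1 < p.2.2 ∧ x p.1 = x p.2.1 ∧ x p.2.1 = x p.2.2)).card) :
    (97 : ℝ) / 100 ≤
      ((Finset.univ.filter (fun x : Fin T → Fin d =>
          (ε - ε ^ 2 / 2) * (X x : ℝ) - (ε / d) * (T.choose 2 : ℝ) - ε ^ 2 * (Y x : ℝ)
            ≥ -(13 / 100))).card : ℝ) / (Fintype.card (Fin T → Fin d) : ℝ) :=
  stmt_5_general d T hd ε hε hTd hεd X Y hX hY
end

section
/- Let d, T ≥ 1 be natural numbers, x : Fin T → Fin d a function, and ε a real number. For y : Fin d let b_y = #{i : x i = y}. Then Σ over permutations π of Fin T satisfying x(π i) = x i for all i of ε^(T − c(π)) equals ∏_{y : Fin d} ∏_{i=1}^{b_y − 1} (1 + i·ε), where empty products equal 1. -/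
/-!
Every permutation of `Fin (n + 1)` is uniquely `swap 0 p * π'` with `π'` fixing `0` and acting
as a permutation of the remaining `n` points (`Equiv.Perm.decomposeFin`). It preserves the
fibres of `x` iff `p` lies in the fibre of `0` and `π'` preserves the fibres of `x ∘ Fin.succ`;
and for `p ≠ 0` the swap merges the fixed point `0` into the cycle of `p`, raising `T − c` by
one. Hence removing the point `0` multiplies the sum by `1 + (b − 1) ε`, where `b` is the size of
the fibre of `x 0`, and induction on `T` yields the product formula.
-/

open Finset Equiv Equiv.Perm

section FiberProducts

variable {β : Type*} [DecidableEq β] {R : Type*} [CommSemiring R] (ε : R)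

theorem prod_range_one_add_mul_eq_mul_prod_pred (m : ℕ) :
    ∏ i ∈ range m, (1 + (i + 1 : ℕ) * ε)
      = (1 + m * ε) * ∏ i ∈ range (m - 1), (1 + (i + 1 : ℕ) * ε) := by
  cases m with
  | zero => simp
  | succ m => rw [prod_range_succ, add_tsub_cancel_right, mul_comm]

theorem sum_fiber_zero_pow_ite {n : ℕ} (x : Fin (n + 1) → β) :
    ∑ p ∈ univ.filter (fun p => x p = x 0), ε ^ (if p = 0 then 0 else 1)
      = 1 + #{j : Fin n | x j.succ = x 0} * ε := by
  rw [sum_filter, Fin.sum_univ_succ]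
  simp [sum_ite, Fin.succ_ne_zero]

theorem prod_fibers_fin_succ [Fintype β] {n : ℕ} (x : Fin (n + 1) → β) :
    ∏ y, ∏ i ∈ range (#{i | x i = y} - 1), (1 + (i + 1 : ℕ) * ε)
      = (1 + #{j : Fin n | x j.succ = x 0} * ε) *
          ∏ y, ∏ i ∈ range (#{j : Fin n | x j.succ = y} - 1), (1 + (i + 1 : ℕ) * ε) := by
  have hfiber : ∀ y, ∏ i ∈ range (#{i | x i = y} - 1), (1 + (i + 1 : ℕ) * ε)
      = (if x 0 = y then 1 + #{j : Fin n | x j.succ = x 0} * ε else 1) *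
          ∏ i ∈ range (#{j : Fin n | x j.succ = y} - 1), (1 + (i + 1 : ℕ) * ε) := fun y => by
    rw [Fin.card_filter_univ_succ]
    split_ifs with h
    · rw [add_tsub_cancel_right, prod_range_one_add_mul_eq_mul_prod_pred, h]
    · rw [one_mul]
  rw [prod_congr rfl fun y _ => hfiber y, prod_mul_distrib, Fintype.prod_ite_eq]

end FiberProducts

namespace Equiv.Perm

section CayleyLength

variable {α : Type*} [Fintype α] [DecidableEq α]

/-- `T − c(σ)`, the least number of transpositions with product `σ`. -/
def cayleyLength (σ : Perm α) : ℕ := σ.cycleType.sum - Multiset.card σ.cycleType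

theorem card_cycleType_le_sum_cycleType (σ : Perm α) :
    Multiset.card σ.cycleType ≤ σ.cycleType.sum := by
  simpa using Multiset.card_nsmul_le_sum fun n hn => one_le_two.trans (two_le_of_mem_cycleType hn)

theorem Disjoint.cayleyLength_mul {σ τ : Perm α} (h : Disjoint σ τ) :
    cayleyLength (σ * τ) = cayleyLength σ + cayleyLength τ := by
  have hσ := card_cycleType_le_sum_cycleType σ
  have hτ := card_cycleType_le_sum_cycleType τ
  simp only [cayleyLength, h.cycleType_mul, Multiset.sum_add, Multiset.card_add]
  omega

theorem IsCycle.cayleyLength_eq {c : Perm α} (hc : c.IsCycle) :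
    cayleyLength c = #c.support - 1 := by
  simp [Perm.cayleyLength, hc.cycleType]

theorem IsCycle.cayleyLength_swap_mul {c : Perm α} (hc : c.IsCycle) {x : α} (hx : c x ≠ x) :
    cayleyLength (swap x (c x) * c) + 1 = cayleyLength c := by
  rw [hc.cayleyLength_eq]
  by_cases hcc : c (c x) = x
  · have h := hc.eq_swap_of_apply_apply_eq_self hx hcc
    have hone : swap x (c x) * c = 1 := by nth_rw 2 [h]; exact swap_mul_self _ _
    rw [hone, card_support_eq_two.mpr ⟨x, c x, hx.symm, h⟩]
    simp [Perm.cayleyLength]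
  · have h2 := hc.two_le_card_support
    rw [(hc.swap_mul hx hcc).cayleyLength_eq, support_swap_mul_eq c x hcc,
      sdiff_singleton_eq_erase, card_erase_of_mem (mem_support.mpr hx)]
    omega

/-- Multiplying by `swap x (τ x)` splits `x` off its cycle as a fixed point. -/
theorem cayleyLength_swap_mul_self_apply {τ : Perm α} {x : α} (hx : τ x ≠ x) :
    cayleyLength (swap x (τ x) * τ) + 1 = cayleyLength τ := by
  set c := τ.cycleOf x
  have hc : c ∈ τ.cycleFactorsFinset :=
    cycleOf_mem_cycleFactorsFinset_iff.mpr (mem_support.mpr hx)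
  have hdisj : Disjoint c (τ * c⁻¹) := (disjoint_mul_inv_of_mem_cycleFactorsFinset hc).symm
  have hτ : τ = c * (τ * c⁻¹) := by rw [hdisj.commute.eq, inv_mul_cancel_right]
  have hcx : τ x = c x := (cycleOf_apply_self τ x).symm
  have hsupp : (swap x (c x) * c).support ⊆ c.support := fun y hy =>
    (mem_support_swap_mul_imp_mem_support_ne hy).1
  have hsplit : cayleyLength (swap x (c x) * c) + 1 = cayleyLength c :=
    (isCycle_cycleOf τ hx).cayleyLength_swap_mul (hcx ▸ hx)
  rw [hcx, hτ, ← mul_assoc, (hdisj.mono hsupp subset_rfl).cayleyLength_mul,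
    hdisj.cayleyLength_mul]
  omega

theorem cayleyLength_swap_mul_of_apply_eq_self {σ : Perm α} {a b : α} (ha : σ a = a)
    (hab : a ≠ b) : cayleyLength (swap a b * σ) = cayleyLength σ + 1 := by
  have hτa : (swap a b * σ) a = b := by simp [ha]
  have h := cayleyLength_swap_mul_self_apply (τ := swap a b * σ) (x := a)
    (by rw [hτa]; exact hab.symm)
  rwa [hτa, ← mul_assoc, swap_mul_self, one_mul, eq_comm] at h

end CayleyLength

theorem decomposeFin_symm_zero {n : ℕ} (e : Perm (Fin n)) :
    decomposeFin.symm (0, e) = e.extendDomain (finSuccAboveEquiv (0 : Fin (n + 1))) := by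
  refine Equiv.ext fun i => Fin.cases ?_ (fun j => ?_) i
  · simp [extendDomain_apply_not_subtype]
  · have h : (finSuccAboveEquiv (0 : Fin (n + 1)) j : Fin (n + 1)) = j.succ := by
      simp [finSuccAboveEquiv_apply]
    rw [decomposeFin_symm_apply_succ, swap_self, refl_apply, ← h, extendDomain_apply_image]
    simp [finSuccAboveEquiv_apply]

theorem decomposeFin_symm_eq_swap_mul {n : ℕ} (p : Fin (n + 1)) (e : Perm (Fin n)) :
    decomposeFin.symm (p, e) = swap 0 p * decomposeFin.symm (0, e) := by
  refine Equiv.ext fun i => Fin.cases ?_ (fun j => ?_) i <;> simp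

theorem cayleyLength_decomposeFin_symm {n : ℕ} (p : Fin (n + 1)) (e : Perm (Fin n)) :
    cayleyLength (decomposeFin.symm (p, e)) = cayleyLength e + if p = 0 then 0 else 1 := by
  have h0 : cayleyLength (decomposeFin.symm (0, e)) = cayleyLength e := by
    simp [cayleyLength, decomposeFin_symm_zero]
  rcases eq_or_ne p 0 with rfl | hp
  · simp [h0]
  · rw [decomposeFin_symm_eq_swap_mul,
      cayleyLength_swap_mul_of_apply_eq_self (decomposeFin_symm_apply_zero 0 e) hp.symm, h0,
      if_neg hp]

section FiberPerms

variable {β : Type*} [DecidableEq β]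

def fiberPerms {T : ℕ} (x : Fin T → β) : Finset (Perm (Fin T)) :=
  univ.filter fun π => ∀ i, x (π i) = x i

theorem decomposeFin_symm_mem_fiberPerms_iff {n : ℕ} (x : Fin (n + 1) → β) (p : Fin (n + 1))
    (e : Perm (Fin n)) :
    decomposeFin.symm (p, e) ∈ fiberPerms x ↔
      x p = x 0 ∧ e ∈ fiberPerms (fun j : Fin n => x j.succ) := by
  simp only [fiberPerms, mem_filter, mem_univ, true_and, Fin.forall_fin_succ,
    decomposeFin_symm_apply_zero, decomposeFin_symm_apply_succ]
  refine and_congr_right fun hp => ?_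
  have hswap : ∀ i, x (swap 0 p i) = x i := fun i => by
    rcases eq_or_ne i 0 with rfl | hi0
    · simp [hp]
    rcases eq_or_ne i p with rfl | hip
    · simp [hp]
    · rw [swap_apply_of_ne_of_ne hi0 hip]
  simp only [hswap]

variable {R : Type*} [CommSemiring R] (ε : R)

theorem sum_pow_cayleyLength_fiberPerms_succ {n : ℕ} (x : Fin (n + 1) → β) :
    ∑ π ∈ fiberPerms x, ε ^ cayleyLength π
      = (1 + #{j : Fin n | x j.succ = x 0} * ε) *
          ∑ π ∈ fiberPerms (fun j : Fin n => x j.succ), ε ^ cayleyLength π := by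
  calc ∑ π ∈ fiberPerms x, ε ^ cayleyLength π
      = ∑ q ∈ (univ.filter fun p => x p = x 0) ×ˢ fiberPerms (fun j : Fin n => x j.succ),
          ε ^ (if q.1 = 0 then 0 else 1) * ε ^ cayleyLength q.2 := by
        refine (sum_equiv decomposeFin.symm (fun q => ?_) (fun q _ => ?_)).symm
        · simp [decomposeFin_symm_mem_fiberPerms_iff x q.1 q.2]
        · rw [cayleyLength_decomposeFin_symm, pow_add, mul_comm]
    _ = _ := by rw [sum_product, ← sum_fiber_zero_pow_ite, sum_mul_sum]

theorem sum_pow_cayleyLength_fiberPerms [Fintype β] : ∀ {T : ℕ} (x : Fin T → β),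
    ∑ π ∈ fiberPerms x, ε ^ cayleyLength π
      = ∏ y, ∏ i ∈ range (#{i | x i = y} - 1), (1 + (i + 1 : ℕ) * ε)
  | 0, x => by simp [fiberPerms, cayleyLength]
  | n + 1, x => by
    rw [sum_pow_cayleyLength_fiberPerms_succ, sum_pow_cayleyLength_fiberPerms,
      prod_fibers_fin_succ]

end FiberPerms

end Equiv.Perm

theorem stmt_7_general (d T : ℕ) (x : Fin T → Fin d) (ε : ℝ)
    (b : Fin d → ℕ)
    (hb : ∀ y, b y = (Finset.univ.filter (fun i : Fin T => x i = y)).card) :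
    ∑ π ∈ Finset.univ.filter (fun π : Equiv.Perm (Fin T) => ∀ i, x (π i) = x i),
        ε ^ (π.cycleType.sum - π.cycleType.card)
      = ∏ y : Fin d, ∏ i ∈ Finset.range (b y - 1), (1 + (i + 1 : ℕ) * ε) := by
  simp only [hb]
  exact sum_pow_cayleyLength_fiberPerms ε x

/-- For a function `x : Fin T → Fin d` with fiber sizes `b_y`, the sum of
`ε^(T − c(π))` over all permutations `π` preserving every fiber of `x` (where `c(π)` is the
number of cycles of `π` counting fixed points, so that
`T − c(π) = π.cycleType.sum − π.cycleType.card`) equals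
`∏_y ∏_{i=1}^{b_y − 1} (1 + i·ε)`. -/
theorem stmt_7 (d T : ℕ) (hd : 1 ≤ d) (hT : 1 ≤ T) (x : Fin T → Fin d) (ε : ℝ)
    (b : Fin d → ℕ)
    (hb : ∀ y, b y = (Finset.univ.filter (fun i : Fin T => x i = y)).card) :
    ∑ π ∈ Finset.univ.filter (fun π : Equiv.Perm (Fin T) => ∀ i, x (π i) = x i),
        ε ^ (π.cycleType.sum - π.cycleType.card)
      = ∏ y : Fin d, ∏ i ∈ Finset.range (b y - 1), (1 + (i + 1 : ℕ) * ε) :=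
  stmt_7_general d T x ε b hb
end

section
/- Let d ≥ 1 be a natural number, b : Fin d → ℕ, T = Σ_y b_y, and ε ≥ 0 a real number. Then Σ_{y : Fin d} Σ_{i=1}^{b_y − 1} log(1 + i·ε) − Σ_{i=1}^{T − 1} log(1 + i·ε/d) ≥ (ε − ε²/2)·Σ_y (b_y choose 2) − (ε/d)·(T choose 2) − ε²·Σ_y (b_y choose 3). -/
/-!
Shift both sums to `∑_{j<m} log (1 + j c)`. Termwise, `x - x²/2 ≤ log (1 + x) ≤ x` for `x ≥ 0`,
and the resulting power sums are binomial coefficients by the hockey-stick identity: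
`∑_{j<m} j = C(m,2)` and `∑_{j<m} j² = C(m,2) + 2 C(m,3)`.
-/

open Finset

theorem Real.sub_sq_div_two_le_log_one_add {x : ℝ} (hx : 0 ≤ x) :
    x - x ^ 2 / 2 ≤ Real.log (1 + x) := by
  -- `2x / (x + 2) - (x - x² / 2) = x³ / (2 (x + 2))`
  refine le_trans ?_ (Real.le_log_one_add_of_nonneg hx)
  rw [le_div_iff₀ (by linarith)]
  nlinarith [pow_nonneg hx 3]

theorem Real.log_one_add_le_self {x : ℝ} (hx : 0 ≤ x) : Real.log (1 + x) ≤ x := by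
  linarith [Real.log_le_sub_one_of_pos (by linarith : 0 < 1 + x)]

theorem Nat.sum_range_choose_eq_choose_succ (m k : ℕ) :
    ∑ j ∈ range m, j.choose k = m.choose (k + 1) := by
  induction m with
  | zero => simp
  | succ m ih => rw [sum_range_succ, ih, Nat.choose_succ_succ', add_comm]

theorem Nat.sq_eq_add_two_mul_choose_two (n : ℕ) : n ^ 2 = n + 2 * n.choose 2 := by
  rw [Nat.choose_two_right, Nat.mul_div_cancel' (Nat.even_mul_pred_self n).two_dvd]
  cases n with
  | zero => rfl
  | succ n => rw [Nat.add_sub_cancel]; ring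

theorem Finset.sum_range_sub_one_succ {M : Type*} [AddCommMonoid M] (f : ℕ → M) (hf : f 0 = 0)
    (m : ℕ) : ∑ i ∈ range (m - 1), f (i + 1) = ∑ i ∈ range m, f i := by
  cases m with
  | zero => simp
  | succ m => rw [Nat.add_sub_cancel, sum_range_succ', hf, add_zero]

section Semiring

variable {R : Type*} [CommSemiring R]

theorem sum_range_natCast (m : ℕ) : ∑ j ∈ range m, (j : R) = m.choose 2 := by
  simpa using congrArg (Nat.cast : ℕ → R) (Nat.sum_range_choose_eq_choose_succ m 1)

theorem sum_range_natCast_sq (m : ℕ) :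
    ∑ j ∈ range m, (j : R) ^ 2 = m.choose 2 + 2 * m.choose 3 := by
  have h := congrArg (Nat.cast : ℕ → R) (Nat.sum_range_choose_eq_choose_succ m 2)
  push_cast at h
  simp_rw [← Nat.cast_pow, Nat.sq_eq_add_two_mul_choose_two, Nat.cast_add, Nat.cast_mul,
    sum_add_distrib, ← mul_sum, h, sum_range_natCast, Nat.cast_ofNat]

end Semiring

theorem sum_range_log_one_add_mul_ge {ε : ℝ} (hε : 0 ≤ ε) (m : ℕ) :
    ε * m.choose 2 - ε ^ 2 / 2 * (m.choose 2 + 2 * m.choose 3)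
      ≤ ∑ j ∈ range m, Real.log (1 + j * ε) := by
  calc ε * m.choose 2 - ε ^ 2 / 2 * (m.choose 2 + 2 * m.choose 3)
      = ∑ j ∈ range m, ((j : ℝ) * ε - ((j : ℝ) * ε) ^ 2 / 2) := by
        rw [← sum_range_natCast_sq, ← sum_range_natCast, sum_sub_distrib, mul_sum, mul_sum]
        congr 1 <;> exact sum_congr rfl fun _ _ => by ring
    _ ≤ ∑ j ∈ range m, Real.log (1 + j * ε) :=
        sum_le_sum fun _ _ => Real.sub_sq_div_two_le_log_one_add (by positivity)

theorem sum_range_log_one_add_mul_le {c : ℝ} (hc : 0 ≤ c) (m : ℕ) :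
    ∑ j ∈ range m, Real.log (1 + j * c) ≤ c * m.choose 2 :=
  calc ∑ j ∈ range m, Real.log (1 + j * c)
      ≤ ∑ j ∈ range m, (j : ℝ) * c :=
        sum_le_sum fun _ _ => Real.log_one_add_le_self (by positivity)
    _ = c * m.choose 2 := by rw [← sum_mul, sum_range_natCast, mul_comm]

theorem stmt_8_general (d : ℕ) (b : Fin d → ℕ) (T : ℕ)
    (ε : ℝ) (hε : 0 ≤ ε) :
    (∑ y : Fin d, ∑ i ∈ Finset.range (b y - 1), Real.log (1 + (i + 1 : ℕ) * ε))
        - ∑ i ∈ Finset.range (T - 1), Real.log (1 + (i + 1 : ℕ) * ε / d)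
      ≥ (ε - ε ^ 2 / 2) * ∑ y : Fin d, ((b y).choose 2 : ℝ)
        - (ε / d) * (T.choose 2 : ℝ)
        - ε ^ 2 * ∑ y : Fin d, ((b y).choose 3 : ℝ) := by
  have shift (c : ℝ) (n : ℕ) :
      ∑ i ∈ range (n - 1), Real.log (1 + (i + 1 : ℕ) * c) = ∑ j ∈ range n, Real.log (1 + j * c) :=
    sum_range_sub_one_succ (fun j : ℕ => Real.log (1 + j * c)) (by simp) n
  simp_rw [mul_div_assoc, shift]
  have hlow := sum_le_sum fun y (_ : y ∈ univ) => sum_range_log_one_add_mul_ge hε (b y)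
  have hup := sum_range_log_one_add_mul_le (div_nonneg hε d.cast_nonneg) T
  have hsplit : ∑ y, (ε * (b y).choose 2 - ε ^ 2 / 2 * ((b y).choose 2 + 2 * (b y).choose 3))
      = (ε - ε ^ 2 / 2) * ∑ y, ((b y).choose 2 : ℝ) - ε ^ 2 * ∑ y, ((b y).choose 3 : ℝ) := by
    rw [mul_sum, mul_sum, ← sum_sub_distrib]
    exact sum_congr rfl fun _ _ => by ring
  linarith

/-- Key analytic estimate for the improved purity-estimation lower bound: for
`b : Fin d → ℕ` with `T = Σ_y b_y` and `ε ≥ 0`,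
`Σ_y Σ_{i=1}^{b_y − 1} log(1 + iε) − Σ_{i=1}^{T − 1} log(1 + iε/d)`
is at least
`(ε − ε²/2)·Σ_y (b_y choose 2) − (ε/d)·(T choose 2) − ε²·Σ_y (b_y choose 3)`. -/
theorem stmt_8 (d : ℕ) (hd : 1 ≤ d) (b : Fin d → ℕ) (T : ℕ) (hT : T = ∑ y, b y)
    (ε : ℝ) (hε : 0 ≤ ε) :
    (∑ y : Fin d, ∑ i ∈ Finset.range (b y - 1), Real.log (1 + (i + 1 : ℕ) * ε))
        - ∑ i ∈ Finset.range (T - 1), Real.log (1 + (i + 1 : ℕ) * ε / d)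
      ≥ (ε - ε ^ 2 / 2) * ∑ y : Fin d, ((b y).choose 2 : ℝ)
        - (ε / d) * (T.choose 2 : ℝ)
        - ε ^ 2 * ∑ y : Fin d, ((b y).choose 3 : ℝ) :=
  stmt_8_general d b T ε hε
end

section
/- Let d, k ≥ 1 be natural numbers, let ρ be a d×d positive semidefinite complex matrix with trace 1, and let M be a complex matrix indexed by (Fin k → Fin d) such that 1 − MᴴM is positive semidefinite (i.e., the operator norm of M is at most 1). For any d×d complex matrix A, write A^{⊗k} for the matrix indexed by f, g : Fin k → Fin d with entries ∏_{i : Fin k} A (f i) (g i). Then for any unitaries U, V in the unitary group of d×d complex matrices, |tr(M·(U ρ Uᴴ)^{⊗k}) − tr(M·(V ρ Vᴴ)^{⊗k})| ≤ 2·k·√(Re tr(ρ²))·‖U − V‖₂, where ‖X‖₂ = √(Σ_{i,j} |X i j|²) is the Frobenius norm. In other words, U ↦ tr(M·(U ρ Uᴴ)^{⊗k}) is Lipschitz with constant 2k√(tr(ρ²)) with respect to the Frobenius norm. -/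
/-!
Write `ρ = Bᴴ B`, so that `U ρ Uᴴ = a aᴴ` and `V ρ Vᴴ = b bᴴ` with `a = U Bᴴ`, `b = V Bᴴ` of
Frobenius norm `√(tr ρ) = 1`. The difference of the `k`-th tensor powers telescopes into `k`
terms, each with `U ρ Uᴴ - V ρ Vᴴ = (U - V)(U ρ)ᴴ + (V ρ)(U - V)ᴴ` in one slot and `a aᴴ` or
`b bᴴ` in the others. Each term is therefore a sum of two products `X Yᴴ` of tensor products,
of Frobenius norms `‖U - V‖₂` and `‖ρ‖₂ = √(tr ρ²)`, and Cauchy–Schwarz for the Hilbert–Schmidt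
inner product, together with `‖M X‖₂ ≤ ‖X‖₂` for the contraction `M`, bounds
`|tr (M X Yᴴ)| ≤ ‖X‖₂ ‖Y‖₂`.
-/

open Matrix
open scoped ComplexOrder

/-- The `k`-th tensor power of a `d × d` matrix, indexed by functions `Fin k → Fin d`. -/
noncomputable def tensorPow {d : ℕ} (k : ℕ) (A : Matrix (Fin d) (Fin d) ℂ) :
    Matrix (Fin k → Fin d) (Fin k → Fin d) ℂ :=
  fun f g => ∏ i : Fin k, A (f i) (g i)

/-- The Frobenius (Schatten 2) norm of a matrix. -/
noncomputable def frobNorm {m n : Type*} [Fintype m] [Fintype n]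
    (X : Matrix m n ℂ) : ℝ :=
  Real.sqrt (∑ i : m, ∑ j : n, ‖X i j‖ ^ 2)

theorem MultilinearMap.map_sub_map_eq_sum_update {R ι N : Type*} {M : ι → Type*} [Semiring R]
    [∀ i, AddCommGroup (M i)] [AddCommGroup N] [∀ i, Module R (M i)] [Module R N]
    [Fintype ι] [LinearOrder ι] (f : MultilinearMap R M N) (a b : ∀ i, M i) :
    f a - f b = ∑ t, f (Function.update (fun i => if i < t then a i else b i) t (a t - b t)) := by
  rw [← Finset.piecewise_univ b a, map_sub_map_piecewise, Finset.piecewise_univ]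
  refine Finset.sum_congr rfl fun t _ => congrArg f (funext fun i => ?_)
  rcases lt_trichotomy i t with h | rfl | h
  · simp [h, h.ne]
  · simp
  · simp [h.ne, h.ne', h.not_gt]

namespace Matrix

section PiTensor

variable {ι R l m n : Type*} [Fintype ι] [CommSemiring R]

noncomputable def piTensor :
    MultilinearMap R (fun _ : ι => Matrix m n R) (Matrix (ι → m) (ι → n) R) :=
  (ofLinearEquiv R).toLinearMap.compMultilinearMap <|
    MultilinearMap.pi fun f => MultilinearMap.pi fun g =>
      (MultilinearMap.mkPiAlgebra R ι R).compLinearMap fun i => entryLinearMap R R (f i) (g i)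

theorem piTensor_apply (P : ι → Matrix m n R) (f : ι → m) (g : ι → n) :
    piTensor P f g = ∏ i, P i (f i) (g i) := rfl

theorem piTensor_mul [DecidableEq ι] [Fintype m] (P : ι → Matrix l m R)
    (Q : ι → Matrix m n R) :
    piTensor P * piTensor Q = piTensor fun i => P i * Q i := by
  ext f g
  simp only [mul_apply, piTensor_apply, Finset.prod_univ_sum, Fintype.piFinset_univ,
    Finset.prod_mul_distrib]

theorem piTensor_conjTranspose [StarRing R] (P : ι → Matrix m n R) :
    (piTensor P)ᴴ = piTensor fun i => (P i)ᴴ := by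
  ext f g
  simp [piTensor_apply, star_prod]

end PiTensor

end Matrix

section FrobNorm

variable {m n : Type*} [Fintype m] [Fintype n]

theorem frobNorm_nonneg (X : Matrix m n ℂ) : 0 ≤ frobNorm X := Real.sqrt_nonneg _

theorem frobNorm_eq_sqrt_re_trace (X : Matrix m n ℂ) : frobNorm X = √(Xᴴ * X).trace.re := by
  rw [frobNorm, Finset.sum_comm]
  simp [trace, mul_apply, Complex.re_sum, Complex.sq_norm, Complex.normSq_apply]

theorem frobNorm_conjTranspose (X : Matrix m n ℂ) : frobNorm Xᴴ = frobNorm X := by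
  rw [frobNorm_eq_sqrt_re_trace, frobNorm_eq_sqrt_re_trace, conjTranspose_conjTranspose,
    trace_mul_comm]

theorem frobNorm_unitary_mul [DecidableEq m] {U : Matrix m m ℂ} (hU : U ∈ unitaryGroup m ℂ)
    (X : Matrix m n ℂ) : frobNorm (U * X) = frobNorm X := by
  rw [frobNorm_eq_sqrt_re_trace, frobNorm_eq_sqrt_re_trace, conjTranspose_mul, Matrix.mul_assoc,
    ← Matrix.mul_assoc Uᴴ, ← star_eq_conjTranspose, Unitary.star_mul_self_of_mem hU,
    Matrix.one_mul]

theorem norm_trace_mul_conjTranspose_le (X Y : Matrix m n ℂ) :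
    ‖(X * Yᴴ).trace‖ ≤ frobNorm X * frobNorm Y :=
  calc ‖(X * Yᴴ).trace‖ = ‖∑ p : m × n, X p.1 p.2 * star (Y p.1 p.2)‖ := by
        simp [trace, mul_apply, Fintype.sum_prod_type]
    _ ≤ ∑ p : m × n, ‖X p.1 p.2‖ * ‖Y p.1 p.2‖ := by
        simpa using norm_sum_le Finset.univ fun p : m × n => X p.1 p.2 * star (Y p.1 p.2)
    _ ≤ √(∑ p : m × n, ‖X p.1 p.2‖ ^ 2) * √(∑ p : m × n, ‖Y p.1 p.2‖ ^ 2) :=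
        Real.sum_mul_le_sqrt_mul_sqrt _ _ _
    _ = frobNorm X * frobNorm Y := by simp only [frobNorm, Fintype.sum_prod_type]

variable [DecidableEq m] {M : Matrix m m ℂ}

theorem frobNorm_mul_le_of_posSemidef_one_sub (hM : (1 - Mᴴ * M).PosSemidef)
    (X : Matrix m n ℂ) : frobNorm (M * X) ≤ frobNorm X := by
  have h := (Complex.le_def.mp (hM.conjTranspose_mul_mul_same X).trace_nonneg).1
  rw [Matrix.mul_sub, Matrix.sub_mul, Matrix.mul_one, trace_sub, Complex.sub_re] at h
  rw [frobNorm_eq_sqrt_re_trace, frobNorm_eq_sqrt_re_trace, conjTranspose_mul]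
  exact Real.sqrt_le_sqrt (by simpa [Matrix.mul_assoc] using h)

theorem norm_trace_mul_mul_conjTranspose_le (hM : (1 - Mᴴ * M).PosSemidef)
    (X Y : Matrix m n ℂ) : ‖(M * (X * Yᴴ)).trace‖ ≤ frobNorm X * frobNorm Y :=
  calc ‖(M * (X * Yᴴ)).trace‖ = ‖(M * X * Yᴴ).trace‖ := by rw [Matrix.mul_assoc]
    _ ≤ frobNorm (M * X) * frobNorm Y := norm_trace_mul_conjTranspose_le _ _
    _ ≤ frobNorm X * frobNorm Y :=
        mul_le_mul_of_nonneg_right (frobNorm_mul_le_of_posSemidef_one_sub hM X)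
          (frobNorm_nonneg Y)

end FrobNorm

section TensorPower

open Function

variable {ι m n : Type*} [Fintype ι] [Fintype m] [Fintype n]

theorem frobNorm_piTensor [DecidableEq ι] (P : ι → Matrix m n ℂ) :
    frobNorm (piTensor P) = ∏ i, frobNorm (P i) := by
  simp only [frobNorm, piTensor_apply, norm_prod, ← Finset.prod_pow]
  rw [← Real.sqrt_prod _ fun _ _ => by positivity]
  simp only [Finset.prod_univ_sum, Fintype.piFinset_univ]

variable [DecidableEq m] {M : Matrix (ι → m) (ι → m) ℂ}

theorem norm_trace_mul_piTensor_update_le [DecidableEq ι] (hM : (1 - Mᴴ * M).PosSemidef)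
    {W : ι → Matrix m n ℂ} (hW : ∀ i, frobNorm (W i) = 1) (t : ι) (X Y : Matrix m n ℂ) :
    ‖(M * piTensor (update (fun i => W i * (W i)ᴴ) t (X * Yᴴ))).trace‖
      ≤ frobNorm X * frobNorm Y := by
  have hfactor : update (fun i => W i * (W i)ᴴ) t (X * Yᴴ)
      = fun i => update W t X i * (update W t Y i)ᴴ := by
    ext1 i
    rcases eq_or_ne i t with rfl | hi <;> simp [*]
  have hnorm (Z : Matrix m n ℂ) : frobNorm (piTensor (update W t Z)) = frobNorm Z := by
    have hrest : ∏ i ∈ {t}ᶜ, frobNorm (update W t Z i) = 1 :=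
      Finset.prod_eq_one fun i hi => by
        rw [update_of_ne (by simpa using hi), hW]
    rw [frobNorm_piTensor, Fintype.prod_eq_mul_prod_compl t, hrest, update_self, mul_one]
  have := norm_trace_mul_mul_conjTranspose_le hM (piTensor (update W t X))
    (piTensor (update W t Y))
  rwa [piTensor_conjTranspose, piTensor_mul, hnorm, hnorm, ← hfactor] at this

theorem norm_trace_mul_piTensor_sub_le [LinearOrder ι] (hM : (1 - Mᴴ * M).PosSemidef)
    {a b : Matrix m n ℂ} (ha : frobNorm a = 1) (hb : frobNorm b = 1)
    {X₁ Y₁ X₂ Y₂ : Matrix m n ℂ} (hD : a * aᴴ - b * bᴴ = X₁ * Y₁ᴴ + X₂ * Y₂ᴴ) :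
    ‖(M * piTensor fun _ => a * aᴴ).trace - (M * piTensor fun _ => b * bᴴ).trace‖
      ≤ Fintype.card ι * (frobNorm X₁ * frobNorm Y₁ + frobNorm X₂ * frobNorm Y₂) := by
  rw [← trace_sub, ← Matrix.mul_sub, (piTensor (R := ℂ) (ι := ι)).map_sub_map_eq_sum_update,
    Matrix.mul_sum, trace_sum, ← nsmul_eq_mul]
  refine (norm_sum_le _ _).trans (Finset.sum_le_card_nsmul _ _ _ fun t _ => ?_)
  set W : ι → Matrix m n ℂ := fun i => if i < t then a else b
  have hW i : frobNorm (W i) = 1 := by dsimp only [W]; split_ifs <;> assumption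
  have hslots : (fun i => if i < t then a * aᴴ else b * bᴴ) = fun i => W i * (W i)ᴴ := by
    ext1 i; dsimp only [W]; split_ifs <;> rfl
  simp only [hslots, hD, MultilinearMap.map_update_add, Matrix.mul_add, trace_add]
  exact (norm_add_le _ _).trans <| add_le_add
    (norm_trace_mul_piTensor_update_le hM hW t _ _)
    (norm_trace_mul_piTensor_update_le hM hW t _ _)

theorem norm_trace_mul_piTensor_conj_sub_le [LinearOrder ι] (hM : (1 - Mᴴ * M).PosSemidef)
    {ρ : Matrix m m ℂ} (hρ : ρ.PosSemidef) (hρtr : ρ.trace = 1)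
    {U V : Matrix m m ℂ} (hU : U ∈ unitaryGroup m ℂ) (hV : V ∈ unitaryGroup m ℂ) :
    ‖(M * piTensor fun _ => U * ρ * Uᴴ).trace - (M * piTensor fun _ => V * ρ * Vᴴ).trace‖
      ≤ 2 * Fintype.card ι * √(ρ * ρ).trace.re * frobNorm (U - V) := by
  obtain ⟨B, hB⟩ : ∃ B : Matrix m m ℂ, ρ = Bᴴ * B := by
    open scoped MatrixOrder in exact CStarAlgebra.nonneg_iff_eq_star_mul_self.mp hρ.nonneg
  have hnorm_one {W : Matrix m m ℂ} (hW : W ∈ unitaryGroup m ℂ) : frobNorm (W * Bᴴ) = 1 := by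
    rw [frobNorm_unitary_mul hW, frobNorm_conjTranspose, frobNorm_eq_sqrt_re_trace, ← hB, hρtr]
    simp
  have hfactor (W : Matrix m m ℂ) : W * ρ * Wᴴ = (W * Bᴴ) * (W * Bᴴ)ᴴ := by
    simp [hB, Matrix.mul_assoc]
  have hpurity {W : Matrix m m ℂ} (hW : W ∈ unitaryGroup m ℂ) :
      frobNorm (W * ρ) = √(ρ * ρ).trace.re := by
    rw [frobNorm_unitary_mul hW, frobNorm_eq_sqrt_re_trace, hρ.1.eq]
  have hdiff : U * ρ * Uᴴ - V * ρ * Vᴴ = (U - V) * (U * ρ)ᴴ + (V * ρ) * (U - V)ᴴ := by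
    simp only [conjTranspose_mul, conjTranspose_sub, hρ.1.eq]
    noncomm_ring
  rw [hfactor, hfactor] at hdiff ⊢
  refine (norm_trace_mul_piTensor_sub_le hM (hnorm_one hU) (hnorm_one hV) hdiff).trans_eq ?_
  rw [hpurity hU, hpurity hV]
  ring

end TensorPower

theorem tensorPow_eq_piTensor {d : ℕ} (k : ℕ) (A : Matrix (Fin d) (Fin d) ℂ) :
    tensorPow k A = piTensor fun _ => A := rfl

theorem stmt_9_general (d k : ℕ)
    (ρ : Matrix (Fin d) (Fin d) ℂ) (hρ : ρ.PosSemidef) (hρtr : ρ.trace = 1)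
    (M : Matrix (Fin k → Fin d) (Fin k → Fin d) ℂ)
    (hM : (1 - Mᴴ * M).PosSemidef)
    (U V : Matrix.unitaryGroup (Fin d) ℂ) :
    ‖(Matrix.trace (M * tensorPow k
            ((U : Matrix (Fin d) (Fin d) ℂ) * ρ * (U : Matrix (Fin d) (Fin d) ℂ)ᴴ))
          - Matrix.trace (M * tensorPow k
            ((V : Matrix (Fin d) (Fin d) ℂ) * ρ * (V : Matrix (Fin d) (Fin d) ℂ)ᴴ)))‖
      ≤ 2 * k * Real.sqrt ((Matrix.trace (ρ * ρ)).re) *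
          frobNorm ((U : Matrix (Fin d) (Fin d) ℂ) - (V : Matrix (Fin d) (Fin d) ℂ)) := by
  simpa [tensorPow_eq_piTensor] using norm_trace_mul_piTensor_conj_sub_le hM hρ hρtr U.2 V.2

/-- For a density matrix `ρ` and an operator `M` with `‖M‖_∞ ≤ 1` on the `k`-fold tensor
power space, the map `U ↦ tr(M·(UρU†)^{⊗k})` is Lipschitz with constant `2k√(tr(ρ²))`
with respect to the Frobenius norm on the unitary group. -/
theorem stmt_9 (d k : ℕ) (hd : 1 ≤ d) (hk : 1 ≤ k)
    (ρ : Matrix (Fin d) (Fin d) ℂ) (hρ : ρ.PosSemidef) (hρtr : ρ.trace = 1)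
    (M : Matrix (Fin k → Fin d) (Fin k → Fin d) ℂ)
    (hM : (1 - Mᴴ * M).PosSemidef)
    (U V : Matrix.unitaryGroup (Fin d) ℂ) :
    ‖(Matrix.trace (M * tensorPow k
            ((U : Matrix (Fin d) (Fin d) ℂ) * ρ * (U : Matrix (Fin d) (Fin d) ℂ)ᴴ))
          - Matrix.trace (M * tensorPow k
            ((V : Matrix (Fin d) (Fin d) ℂ) * ρ * (V : Matrix (Fin d) (Fin d) ℂ)ᴴ)))‖
      ≤ 2 * k * Real.sqrt ((Matrix.trace (ρ * ρ)).re) *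
          frobNorm ((U : Matrix (Fin d) (Fin d) ℂ) - (V : Matrix (Fin d) (Fin d) ℂ)) :=
  stmt_9_general d k ρ hρ hρtr M hM U V
end

section
/- Let m and n be finite types, and let A, C be complex square matrices indexed by m and B, D be complex square matrices indexed by n. If ‖A‖₁ = ‖D‖₁ = 1, then ‖A ⊗ B − C ⊗ D‖₁ ≤ ‖B − D‖₁ + ‖A − C‖₁, where ⊗ denotes the Kronecker (tensor) product of matrices. -/
open Matrix
open scoped ComplexOrder Kronecker

/-- The trace norm of a complex square matrix: the trace of the positive semidefinite
square root of `XᴴX`. -/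
noncomputable def traceNorm {m : Type*} [Fintype m] [DecidableEq m] (X : Matrix m m ℂ) : ℝ :=
  (((Matrix.posSemidef_conjTranspose_mul_self X).1.eigenvectorUnitary : Matrix m m ℂ) *
      diagonal (((↑) : ℝ → ℂ) ∘ Real.sqrt ∘ (Matrix.posSemidef_conjTranspose_mul_self X).1.eigenvalues) *
      (star (Matrix.posSemidef_conjTranspose_mul_self X).1.eigenvectorUnitary : Matrix m m ℂ)).trace.re

/-!
Write `‖X‖₁ = Re tr |X|` with `|X| = √(XᴴX)`. Uniqueness of positive square roots gives
`|X ⊗ Y| = |X| ⊗ |Y|`, so the trace norm is multiplicative under `⊗`. The triangle inequality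
comes from `‖X‖₁ = max {Re tr (VᴴX) | VᴴV ≤ 1}`: the bound is column-wise Cauchy–Schwarz in an
eigenbasis of `XᴴX`, and the maximum is attained at `V = X |X|⁺` (pseudo-inverse). The theorem then follows
from `A ⊗ B - C ⊗ D = A ⊗ (B - D) + (A - C) ⊗ D`.
-/

open scoped MatrixOrder

section

variable {m n : Type*} [Fintype m] [Fintype n]

lemma re_trace_conjTranspose_mul_le (Y Z : Matrix m n ℂ) :
    (Yᴴ * Z).trace.re ≤ ∑ i, √((Yᴴ * Y) i i).re * √((Zᴴ * Z) i i).re := by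
  have diag_eq_inner : ∀ (M N : Matrix m n ℂ) (i : n), (Mᴴ * N) i i =
      inner ℂ (WithLp.toLp 2 fun k => M k i) (WithLp.toLp 2 fun k => N k i) := by
    intro M N i
    simp [EuclideanSpace.inner_toLp_toLp, mul_apply, dotProduct, mul_comm]
  rw [trace, Complex.re_sum]
  refine Finset.sum_le_sum fun i _ => ?_
  have hnorm : ∀ (M : Matrix m n ℂ), √((Mᴴ * M) i i).re = ‖WithLp.toLp 2 fun k => M k i‖ :=
    fun M => by rw [diag_eq_inner, norm_eq_sqrt_re_inner (𝕜 := ℂ)]; rfl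
  rw [diag_apply, diag_eq_inner, hnorm, hnorm]
  exact (Complex.re_le_norm _).trans (norm_inner_le_norm _ _)

variable [DecidableEq n]

lemma traceNorm_eq_re_trace_abs (X : Matrix n n ℂ) : traceNorm X = (CFC.abs X).trace.re := by
  have hP := Matrix.posSemidef_conjTranspose_mul_self X
  rw [CFC.abs, star_eq_conjTranspose, CFC.sqrt_eq_real_sqrt _ hP.nonneg, cfcₙ_eq_cfc, hP.1.cfc_eq]
  rfl

lemma traceNorm_eq_sum_sqrt_eigenvalues (X : Matrix n n ℂ) :
    traceNorm X = ∑ i, √((Matrix.posSemidef_conjTranspose_mul_self X).1.eigenvalues i) := by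
  rw [traceNorm, trace_mul_cycle, Unitary.coe_star_mul_self, one_mul, trace_diagonal]
  simp

lemma re_trace_conjTranspose_mul_le_traceNorm {V : Matrix n n ℂ} (hV : Vᴴ * V ≤ 1)
    (X : Matrix n n ℂ) : (Vᴴ * X).trace.re ≤ traceNorm X := by
  set hH := (posSemidef_conjTranspose_mul_self X).1
  set W : Matrix n n ℂ := (hH.eigenvectorUnitary : Matrix n n ℂ)
  have hXW : (X * W)ᴴ * (X * W) = diagonal (Complex.ofReal ∘ hH.eigenvalues) := by
    refine Eq.trans ?_ hH.conjStarAlgAut_star_eigenvectorUnitary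
    rw [Unitary.conjStarAlgAut_star_apply, conjTranspose_mul, star_eq_conjTranspose]
    noncomm_ring
  have hVW : (V * W)ᴴ * (V * W) ≤ 1 := by
    have := star_left_conjugate_le_conjugate hV W
    rwa [mul_one, Unitary.coe_star_mul_self, star_eq_conjTranspose, ← mul_assoc,
      ← conjTranspose_mul, mul_assoc] at this
  have hVW_diag (i : n) : (((V * W)ᴴ * (V * W)) i i).re ≤ 1 := by
    have := Complex.le_def.mp ((le_iff.mp hVW).diag_nonneg (i := i))
    simpa using this.1
  calc (Vᴴ * X).trace.re = ((V * W)ᴴ * (X * W)).trace.re := by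
        have hWW : W * star W = 1 := Unitary.coe_mul_star_self _
        rw [conjTranspose_mul, ← star_eq_conjTranspose W, mul_assoc, trace_mul_comm (star W),
          mul_assoc, mul_assoc, hWW, mul_one]
    _ ≤ ∑ i, √(((V * W)ᴴ * (V * W)) i i).re * √(((X * W)ᴴ * (X * W)) i i).re :=
        re_trace_conjTranspose_mul_le _ _
    _ ≤ ∑ i, √(hH.eigenvalues i) := by
        refine Finset.sum_le_sum fun i _ => ?_
        rw [hXW, diagonal_apply_eq]
        exact mul_le_of_le_one_left (Real.sqrt_nonneg _)
          (Real.sqrt_le_one.mpr (hVW_diag i))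
    _ = traceNorm X := (traceNorm_eq_sum_sqrt_eigenvalues X).symm

lemma exists_contraction_re_trace_eq_traceNorm (X : Matrix n n ℂ) :
    ∃ V : Matrix n n ℂ, Vᴴ * V ≤ 1 ∧ (Vᴴ * X).trace.re = traceNorm X := by
  have hP : 0 ≤ Xᴴ * X := (posSemidef_conjTranspose_mul_self X).nonneg
  have hcont (f : ℝ → ℝ) : ContinuousOn f (spectrum ℝ (Xᴴ * X)) :=
    Set.Finite.continuousOn finite_real_spectrum f
  -- `(√0)⁻¹ = 0`, so `T` is the pseudo-inverse of `|X|`.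
  set T := cfc (fun x : ℝ => (√x)⁻¹) (Xᴴ * X)
  have hT : Tᴴ = T := (cfc_predicate _ _ : IsSelfAdjoint T)
  refine ⟨X * T, ?_, ?_⟩
  · have : (X * T)ᴴ * (X * T) = cfc (fun x : ℝ => (√x)⁻¹ * x * (√x)⁻¹) (Xᴴ * X) := by
      rw [cfc_mul _ _ _ (hcont _) (hcont _), cfc_mul _ _ _ (hcont _) (hcont _), cfc_id' ℝ _,
        conjTranspose_mul, hT]
      noncomm_ring
    rw [this]
    refine cfc_le_one _ _ fun x hx => ?_
    have hx0 : 0 ≤ x := spectrum_nonneg_of_nonneg hP hx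
    calc (√x)⁻¹ * x * (√x)⁻¹ = x / √x ^ 2 := by ring
      _ ≤ 1 := by rw [Real.sq_sqrt hx0]; exact div_self_le_one x
  · have : (X * T)ᴴ * X = cfc Real.sqrt (Xᴴ * X) := by
      have hTP : T * (Xᴴ * X) = cfc (fun x : ℝ => (√x)⁻¹ * x) (Xᴴ * X) := by
        rw [cfc_mul _ _ _ (hcont _) (hcont _), cfc_id' ℝ _]
      rw [conjTranspose_mul, hT, mul_assoc, hTP]
      exact cfc_congr fun x _ => by rw [← div_eq_inv_mul, Real.div_sqrt]
    rw [this, traceNorm_eq_re_trace_abs, CFC.abs, star_eq_conjTranspose,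
      CFC.sqrt_eq_real_sqrt _ hP, cfcₙ_eq_cfc]

lemma traceNorm_add_le (X Y : Matrix n n ℂ) : traceNorm (X + Y) ≤ traceNorm X + traceNorm Y := by
  obtain ⟨V, hV, hVtr⟩ := exists_contraction_re_trace_eq_traceNorm (X + Y)
  rw [← hVtr, mul_add, trace_add, Complex.add_re]
  exact add_le_add (re_trace_conjTranspose_mul_le_traceNorm hV X)
    (re_trace_conjTranspose_mul_le_traceNorm hV Y)

lemma cfcAbs_kronecker [DecidableEq m] (X : Matrix m m ℂ) (Y : Matrix n n ℂ) :
    CFC.abs (X ⊗ₖ Y) = CFC.abs X ⊗ₖ CFC.abs Y := by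
  have hnonneg : 0 ≤ CFC.abs X ⊗ₖ CFC.abs Y :=
    ((CFC.abs_nonneg X).posSemidef.kronecker (CFC.abs_nonneg Y).posSemidef).nonneg
  refine CFC.sqrt_unique ?_ hnonneg
  rw [← mul_kronecker_mul, CFC.abs_mul_abs, CFC.abs_mul_abs, star_eq_conjTranspose (X ⊗ₖ Y),
    conjTranspose_kronecker, mul_kronecker_mul]
  rfl

lemma traceNorm_kronecker [DecidableEq m] (X : Matrix m m ℂ) (Y : Matrix n n ℂ) :
    traceNorm (X ⊗ₖ Y) = traceNorm X * traceNorm Y := by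
  rw [traceNorm_eq_re_trace_abs, cfcAbs_kronecker, trace_kronecker, Complex.mul_re,
    traceNorm_eq_re_trace_abs X, traceNorm_eq_re_trace_abs Y]
  have hX : (CFC.abs X).trace.im = 0 :=
    (Complex.le_def.mp (CFC.abs_nonneg X).posSemidef.trace_nonneg).2.symm
  rw [hX, zero_mul, sub_zero]

end

/-- If `‖A‖₁ = ‖D‖₁ = 1`, then `‖A ⊗ B − C ⊗ D‖₁ ≤ ‖B − D‖₁ + ‖A − C‖₁` for the
Kronecker product of complex square matrices. -/
theorem stmt_10 (m n : Type*) [Fintype m] [DecidableEq m] [Fintype n] [DecidableEq n]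
    (A C : Matrix m m ℂ) (B D : Matrix n n ℂ)
    (hA : traceNorm A = 1) (hD : traceNorm D = 1) :
    traceNorm (A ⊗ₖ B - C ⊗ₖ D) ≤ traceNorm (B - D) + traceNorm (A - C) := by
  have hsplit : A ⊗ₖ B - C ⊗ₖ D = A ⊗ₖ (B - D) + (A - C) ⊗ₖ D := by
    ext i j
    simp only [Matrix.sub_apply, Matrix.add_apply, kroneckerMap_apply]
    ring
  calc traceNorm (A ⊗ₖ B - C ⊗ₖ D)
      ≤ traceNorm (A ⊗ₖ (B - D)) + traceNorm ((A - C) ⊗ₖ D) := hsplit ▸ traceNorm_add_le _ _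
    _ = traceNorm (B - D) + traceNorm (A - C) := by
      rw [traceNorm_kronecker, traceNorm_kronecker, hA, hD, one_mul, mul_one]
end

section
/- Let d > 0 be a real number and a, b natural numbers. Then ∏_{i=0}^{b−1} (d + i)/(d + a + i) ≥ exp(−(a·b)/d). -/
/-! From `1 + a/(d+i) ≤ exp (a/(d+i))`, every factor is at least `exp (-a/(d+i)) ≥ exp (-a/d)`,
and there are `b` factors. -/

open Finset

namespace Real

theorem exp_neg_div_le_div_add {x y : ℝ} (hx : 0 < x) (hy : 0 ≤ y) :
    exp (-(y / x)) ≤ x / (x + y) := by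
  have hxy : x / (x + y) = (y / x + 1)⁻¹ := by
    field_simp
    ring
  rw [hxy, exp_neg]
  exact inv_anti₀ (by positivity) (add_one_le_exp _)

theorem exp_neg_div_le_div_add_add {d a t : ℝ} (hd : 0 < d) (ha : 0 ≤ a) (ht : 0 ≤ t) :
    exp (-(a / d)) ≤ (d + t) / (d + a + t) := by
  calc exp (-(a / d))
      ≤ exp (-(a / (d + t))) := by
        gcongr
        linarith
    _ ≤ (d + t) / (d + t + a) := exp_neg_div_le_div_add (by positivity) ha
    _ = (d + t) / (d + a + t) := by ring

end Real

/-- For real `d > 0` and naturals `a, b`: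
`∏_{i=0}^{b−1} (d + i)/(d + a + i) ≥ exp(−ab/d)`. -/
theorem stmt_11 (d : ℝ) (hd : 0 < d) (a b : ℕ) :
    ∏ i ∈ Finset.range b, (d + i) / (d + a + i) ≥ Real.exp (-(a * b : ℝ) / d) := by
  calc Real.exp (-(a * b : ℝ) / d)
      = ∏ _i ∈ range b, Real.exp (-(a / d)) := by
        rw [prod_const, card_range, ← Real.exp_nat_mul]
        ring_nf
    _ ≤ ∏ i ∈ range b, (d + i) / (d + a + i) :=
        prod_le_prod (fun _ _ => (Real.exp_pos _).le) fun i _ =>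
          Real.exp_neg_div_le_div_add_add hd a.cast_nonneg i.cast_nonneg
end

section
/- Let r, d ≥ 1 be natural numbers, let μ be the Haar probability measure on the unitary group of d×d complex matrices, let e₀ be a fixed standard basis unit vector of ℂ^d, and let μ^r be the r-fold product of μ on (Fin r → U(d)). Then ∫ (1/r²)·Σ_{i,j : Fin r} |⟨U_i e₀, U_j e₀⟩|² dμ^r(U) = 1/r + (r − 1)/(r·d). That is, the expected purity of the uniform convex mixture ρ = (1/r) Σ_{i=1}^r |ψ_i⟩⟨ψ_i| of r i.i.d. Haar-random pure states ψ_i = U_i e₀ equals (1/r²)(r + r(r−1)/d). -/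
open MeasureTheory Matrix

instance Matrix.secondCountableTopology {m n R : Type*} [TopologicalSpace R]
    [SecondCountableTopology R] [Countable m] [Countable n] :
    SecondCountableTopology (Matrix m n R) :=
  inferInstanceAs (SecondCountableTopology (m → n → R))

theorem MeasureTheory.measurePreserving_eval_prodMk {ι : Type*} [Fintype ι] {α : ι → Type*}
    [∀ i, MeasurableSpace (α i)] (μ : ∀ i, Measure (α i)) [∀ i, IsProbabilityMeasure (μ i)]
    {i j : ι} (hij : i ≠ j) :
    MeasurePreserving (fun x : ∀ k, α k => (x i, x j)) (Measure.pi μ) ((μ i).prod (μ j)) where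
  measurable := (measurable_pi_apply i).prodMk (measurable_pi_apply j)
  map_eq := by
    rw [((ProbabilityTheory.iIndepFun_pi (X := fun _ => id) fun _ => aemeasurable_id).indepFun
      hij).map_prod_eq_prod_map_map (measurable_pi_apply i).aemeasurable
      (measurable_pi_apply j).aemeasurable, (measurePreserving_eval μ i).map_eq,
      (measurePreserving_eval μ j).map_eq]

namespace Matrix

variable {n : Type*} [Fintype n] [DecidableEq n]

theorem permMatrix_mem_unitaryGroup {α : Type*} [CommRing α] [StarRing α] (σ : Equiv.Perm n) :
    σ.permMatrix α ∈ unitaryGroup n α := by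
  rw [mem_unitaryGroup_iff, star_eq_conjTranspose, conjTranspose_permMatrix, ← permMatrix_mul,
    inv_mul_cancel, permMatrix_one]

theorem sum_norm_sq_apply_of_mem_unitaryGroup {𝕜 : Type*} [RCLike 𝕜] {U : Matrix n n 𝕜}
    (hU : U ∈ unitaryGroup n 𝕜) (j : n) : ∑ i, ‖U i j‖ ^ 2 = 1 := by
  have h := congr_fun₂ (mem_unitaryGroup_iff'.mp hU) j j
  simp only [mul_apply, star_apply, RCLike.star_def, RCLike.conj_mul, one_apply_eq] at h
  exact_mod_cast h

namespace UnitaryGroup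

instance secondCountableTopology {α : Type*} [CommRing α] [StarRing α] [TopologicalSpace α]
    [SecondCountableTopology α] : SecondCountableTopology (unitaryGroup n α) :=
  TopologicalSpace.Subtype.secondCountableTopology (unitaryGroup n α : Set (Matrix n n α))

theorem star_mulVec_single_dotProduct_mulVec_single {α : Type*} [CommRing α]
    [StarRing α] (U V : unitaryGroup n α) (i j : n) :
    star ((U : Matrix n n α) *ᵥ Pi.single i 1) ⬝ᵥ ((V : Matrix n n α) *ᵥ Pi.single j 1)
      = (U⁻¹ * V : unitaryGroup n α) i j := by
  rw [star_mulVec, ← dotProduct_mulVec, mulVec_mulVec]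
  simp [star_eq_conjTranspose]

theorem continuous_norm_sq_apply (i j : n) :
    Continuous fun V : unitaryGroup n ℂ => ‖(V : Matrix n n ℂ) i j‖ ^ 2 :=
  ((continuous_subtype_val.matrix_elem i j).norm).pow 2

theorem integrable_norm_sq_apply_comp {X : Type*} [TopologicalSpace X] [MeasurableSpace X]
    [OpensMeasurableSpace X] (ν : Measure X) [IsFiniteMeasure ν] {f : X → unitaryGroup n ℂ}
    (hf : Continuous f) (i j : n) :
    Integrable (fun x => ‖(f x : Matrix n n ℂ) i j‖ ^ 2) ν := by
  refine .of_bound ((continuous_norm_sq_apply i j).comp hf).aestronglyMeasurable 1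
    (ae_of_all _ fun x => ?_)
  rw [norm_pow, norm_norm]
  exact pow_le_one₀ (norm_nonneg _) (entry_norm_bound_of_unitary (f x).2 i j)

variable (μ : Measure (unitaryGroup n ℂ)) [IsProbabilityMeasure μ] [μ.IsMulLeftInvariant]

theorem integral_norm_sq_apply (i j : n) :
    ∫ V, ‖(V : Matrix n n ℂ) i j‖ ^ 2 ∂μ = (Fintype.card n : ℝ)⁻¹ := by
  have row_indep : ∀ k, ∫ V, ‖(V : Matrix n n ℂ) k j‖ ^ 2 ∂μ
      = ∫ V, ‖(V : Matrix n n ℂ) i j‖ ^ 2 ∂μ := fun k => by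
    let P : unitaryGroup n ℂ := ⟨_, permMatrix_mem_unitaryGroup (Equiv.swap i k)⟩
    -- `(P * V) i j = V (swap i k i) j = V k j`
    rw [← integral_mul_left_eq_self _ P]
    simp [P, PEquiv.toMatrix_toPEquiv_mul]
  have total : ∑ k, ∫ V, ‖(V : Matrix n n ℂ) k j‖ ^ 2 ∂μ = 1 := by
    rw [← integral_finsetSum _ fun k _ => by
      simpa using integrable_norm_sq_apply_comp μ continuous_id k j]
    simp [sum_norm_sq_apply_of_mem_unitaryGroup (SetLike.coe_mem _)]
  simp only [row_indep, Finset.sum_const, Finset.card_univ, nsmul_eq_mul] at total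
  exact eq_inv_of_mul_eq_one_right total

theorem integral_pi_norm_sq_inv_mul_apply {ι : Type*} [Fintype ι] [DecidableEq ι] (i j : ι)
    (a : n) :
    ∫ U, ‖(((U i)⁻¹ * U j : unitaryGroup n ℂ) : Matrix n n ℂ) a a‖ ^ 2
        ∂Measure.pi (fun _ : ι => μ) = if i = j then 1 else (Fintype.card n : ℝ)⁻¹ := by
  split_ifs with hij
  · simp [hij]
  have hpair := measurePreserving_eval_prodMk (fun _ : ι => μ) hij
  have hcont : Continuous fun p : unitaryGroup n ℂ × unitaryGroup n ℂ => p.1⁻¹ * p.2 := by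
    fun_prop
  calc _ = ∫ p, ‖((p.1⁻¹ * p.2 : unitaryGroup n ℂ) : Matrix n n ℂ) a a‖ ^ 2 ∂μ.prod μ := by
        rw [← hpair.map_eq]
        exact (integral_map hpair.measurable.aemeasurable
          ((continuous_norm_sq_apply a a).comp hcont).aestronglyMeasurable).symm
    _ = ∫ u, ∫ v, ‖((u⁻¹ * v : unitaryGroup n ℂ) : Matrix n n ℂ) a a‖ ^ 2 ∂μ ∂μ :=
        integral_prod _ (integrable_norm_sq_apply_comp _ hcont a a)
    _ = ∫ _, (Fintype.card n : ℝ)⁻¹ ∂μ := integral_congr_ae <| ae_of_all _ fun u =>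
        (integral_mul_left_eq_self _ u⁻¹).trans (integral_norm_sq_apply μ a a)
    _ = (Fintype.card n : ℝ)⁻¹ := by simp

end UnitaryGroup

end Matrix

/-- The Haar probability measure is encoded as an arbitrary left-invariant Borel probability
measure `μ` on the unitary group (such a measure is unique, and is the Haar measure). -/
theorem stmt_12 (r d : ℕ) (hr : 0 < r) (hd : 0 < d)
    (μ : Measure (Matrix.unitaryGroup (Fin d) ℂ))
    [IsProbabilityMeasure μ] [μ.IsMulLeftInvariant]
    (e₀ : Fin d → ℂ) (he₀ : e₀ = fun i => if i = ⟨0, hd⟩ then 1 else 0) :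
    ∫ U : Fin r → Matrix.unitaryGroup (Fin d) ℂ,
        (1 / (r : ℝ) ^ 2) * ∑ i : Fin r, ∑ j : Fin r,
          ‖(star ((U i : Matrix (Fin d) (Fin d) ℂ).mulVec e₀) ⬝ᵥ
              ((U j : Matrix (Fin d) (Fin d) ℂ).mulVec e₀))‖ ^ 2
        ∂(Measure.pi fun _ : Fin r => μ)
      = 1 / (r : ℝ) + ((r : ℝ) - 1) / ((r : ℝ) * d) := by
  obtain rfl : e₀ = Pi.single ⟨0, hd⟩ 1 := by
    rw [he₀]; funext i; exact (Pi.single_apply _ _ _).symm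
  have hint (i j : Fin r) := UnitaryGroup.integrable_norm_sq_apply_comp
    (Measure.pi fun _ : Fin r => μ) (f := fun U => (U i)⁻¹ * U j) (by fun_prop) ⟨0, hd⟩ ⟨0, hd⟩
  simp only [UnitaryGroup.star_mulVec_single_dotProduct_mulVec_single]
  rw [integral_const_mul,
    integral_finsetSum _ fun i _ => integrable_finsetSum _ fun j _ => hint i j]
  simp only [integral_finsetSum _ fun j _ => hint _ j,
    UnitaryGroup.integral_pi_norm_sq_inv_mul_apply]
  simp [Finset.sum_ite, Finset.filter_eq, Finset.filter_ne, Nat.cast_pred hr]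
  field_simp
end

section
/- Let x, y, d ≥ 1 be natural numbers, let ρ_x be a positive semidefinite complex matrix with trace 1 indexed by (Fin x → Fin d), and let ρ_y be a positive semidefinite complex matrix with trace 1 indexed by (Fin y → Fin d). Let M be their tensor product, the matrix indexed by ((Fin x ⊕ Fin y) → Fin d) with entries M(F, G) = ρ_x(F ∘ inl, G ∘ inl) · ρ_y(F ∘ inr, G ∘ inr). Then Re tr(M · Σ_{π ∈ Perm(Fin x ⊕ Fin y)} P_π) ≥ Re tr(ρ_x · Σ_{π ∈ Perm(Fin x)} P_π) · Re tr(ρ_y · Σ_{π ∈ Perm(Fin y)} P_π). -/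
open Matrix
open scoped ComplexOrder

/-- The permutation operator `P_π` on `(ℂ^d)^{⊗ι}`: its `(f, g)` entry is `1` if
`f = g ∘ π⁻¹` and `0` otherwise. -/
def permOp (d : ℕ) (ι : Type*) [Fintype ι] [DecidableEq ι] (π : Equiv.Perm ι) :
    Matrix (ι → Fin d) (ι → Fin d) ℂ :=
  fun f g => if f = g ∘ ⇑π⁻¹ then 1 else 0

/-!
Writing `ρ_x = Σ_a |b_a⟩⟨b_a|` and `ρ_y = Σ_b |c_b⟩⟨c_b|`, every trace in the statement becomes a
sum of forms `⟨u, Σ_π P_π u⟩`, so it suffices to show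
`⟨v, Σ P v⟩ ⟨w, Σ P w⟩ ≤ ⟨v ⊗ w, Σ P (v ⊗ w)⟩` for single vectors.
Symmetrizing `v` over `S_x` and `w` over `S_y` multiplies the right side by `(x! y!)²`.
For symmetric `V`, `W` every single term `⟨V ⊗ W, P_π (V ⊗ W)⟩` is a sum of squared moduli:
split the positions according to whether `π` moves them across the cut `x | y`; as many cross in
one direction as in the other, and pairing the crossing positions of `V` with those of `W`
turns the term into `Σ |⟨V_m, W_{m'}⟩|²`. Dropping all `π ∉ S_x × S_y`, whose terms equal
`‖V‖² ‖W‖² = x! y! ⟨v, Σ P v⟩ ⟨w, Σ P w⟩`, gives the inequality.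
-/

open Equiv Function ComplexConjugate
open Complex (normSq)

section Patch

variable {α β D : Type*}

lemma sum_comp_equiv [Fintype α] [DecidableEq α] [Fintype β] [DecidableEq β] [Fintype D]
    {M : Type*} [AddCommMonoid M] (e : β ≃ α) (φ : (β → D) → M) :
    ∑ f : α → D, φ (f ∘ e) = ∑ g : β → D, φ g :=
  (e.symm.arrowCongr (Equiv.refl D)).sum_comp φ

def patch (p : α → Prop) [DecidablePred p] (s : {a // p a} → D) (m : {a // ¬p a} → D) :
    α → D :=
  (piEquivPiSubtypeProd p fun _ => D).symm (s, m)

variable {p q : α → Prop} [DecidablePred p] [DecidablePred q]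

lemma patch_coe_pos (s : {a // p a} → D) (m : {a // ¬p a} → D) (a : {a // p a}) :
    patch p s m a = s a := dif_pos a.2

lemma patch_coe_neg (s : {a // p a} → D) (m : {a // ¬p a} → D) (a : {a // ¬p a}) :
    patch p s m a = m a := dif_neg a.2

lemma sum_patch [Fintype α] [DecidableEq α] [Fintype D] (p : α → Prop) [DecidablePred p]
    {M : Type*} [AddCommMonoid M] (φ : (α → D) → M) :
    ∑ f : α → D, φ f = ∑ s : {a // p a} → D, ∑ m : {a // ¬p a} → D, φ (patch p s m) := by
  rw [← (piEquivPiSubtypeProd p fun _ => D).symm.sum_comp, Fintype.sum_prod_type]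
  rfl

lemma patch_comp_subtypeCongr (e₁ : {a // p a} ≃ {a // q a}) (e₂ : {a // ¬p a} ≃ {a // ¬q a})
    (s : {a // q a} → D) (m : {a // ¬q a} → D) :
    patch q s m ∘ subtypeCongr e₁ e₂ = patch p (s ∘ e₁) (m ∘ e₂) := by
  funext a
  by_cases h : p a
  · have he : subtypeCongr e₁ e₂ a = e₁ ⟨a, h⟩ := by
      simp [subtypeCongr, sumCompl_symm_apply_of_pos h]
    rw [Function.comp_apply, he, patch_coe_pos]
    exact (patch_coe_pos (s ∘ e₁) (m ∘ e₂) ⟨a, h⟩).symm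
  · have he : subtypeCongr e₁ e₂ a = e₂ ⟨a, h⟩ := by
      simp [subtypeCongr, sumCompl_symm_apply_of_neg h]
    rw [Function.comp_apply, he, patch_coe_neg]
    exact (patch_coe_neg (s ∘ e₁) (m ∘ e₂) ⟨a, h⟩).symm

lemma apply_patch_comp_eq {M : Type*} {V : (α → D) → M} (hV : ∀ (σ : Perm α) f, V (f ∘ σ) = V f)
    (e₁ : {a // p a} ≃ {a // q a}) (e₂ : {a // ¬p a} ≃ {a // ¬q a})
    (s : {a // q a} → D) (m : {a // ¬q a} → D) :
    V (patch p (s ∘ e₁) (m ∘ e₂)) = V (patch q s m) := by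
  rw [← patch_comp_subtypeCongr, hV]

end Patch

noncomputable def matchEquiv {A C γ : Type*} {p : A → Prop} {q : C → Prop} {f : A → γ}
    {g : C → γ} (hf : Injective f) (hg : Injective g)
    (hp : ∀ a, p a ↔ ∃ c, f a = g c) (hq : ∀ c, q c ↔ ∃ a, f a = g c) :
    {a // p a} ≃ {c // q c} where
  toFun a := ⟨((hp a).1 a.2).choose, (hq _).2 ⟨a, ((hp a).1 a.2).choose_spec⟩⟩
  invFun c := ⟨((hq c).1 c.2).choose, (hp _).2 ⟨c, ((hq c).1 c.2).choose_spec⟩⟩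
  left_inv a := by
    refine Subtype.ext (hf ?_)
    dsimp only
    generalize_proofs h₁ h₂
    exact h₂.choose_spec.trans h₁.choose_spec.symm
  right_inv c := by
    refine Subtype.ext (hg ?_)
    dsimp only
    generalize_proofs h₁ h₂
    exact h₂.choose_spec.symm.trans h₁.choose_spec

lemma matchEquiv_spec {A C γ : Type*} {p : A → Prop} {q : C → Prop} {f : A → γ} {g : C → γ}
    (hf : Injective f) (hg : Injective g)
    (hp : ∀ a, p a ↔ ∃ c, f a = g c) (hq : ∀ c, q c ↔ ∃ a, f a = g c) (a : {a // p a}) :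
    f a = g (matchEquiv hf hg hp hq a) :=
  ((hp a).1 a.2).choose_spec

namespace Equiv.Perm

variable {L R : Type*} (π : Perm (L ⊕ R))

lemma isLeft_symm_apply_iff (z : L ⊕ R) : (π.symm z).isLeft ↔ ∃ i, π (.inl i) = z :=
  Sum.isLeft_iff.trans <| exists_congr fun _ => π.symm_apply_eq.trans eq_comm

lemma isRight_symm_apply_iff (z : L ⊕ R) : (π.symm z).isRight ↔ ∃ j, π (.inr j) = z :=
  Sum.isRight_iff.trans <| exists_congr fun _ => π.symm_apply_eq.trans eq_comm

noncomputable def crossLR :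
    {i : L // (π (.inl i)).isRight} ≃ {j : R // (π.symm (.inr j)).isLeft} :=
  matchEquiv (π.injective.comp Sum.inl_injective) Sum.inr_injective
    (fun _ => Sum.isRight_iff) (fun _ => π.isLeft_symm_apply_iff _)

noncomputable def crossRL :
    {j : R // (π (.inr j)).isLeft} ≃ {l : L // (π.symm (.inl l)).isRight} :=
  matchEquiv (π.injective.comp Sum.inr_injective) Sum.inl_injective
    (fun _ => Sum.isLeft_iff) (fun _ => π.isRight_symm_apply_iff _)

noncomputable def stayL :
    {i : L // ¬(π (.inl i)).isRight} ≃ {l : L // ¬(π.symm (.inl l)).isRight} :=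
  matchEquiv (π.injective.comp Sum.inl_injective) Sum.inl_injective
    (fun _ => by simp [Sum.isLeft_iff]) (fun _ => by simp [π.isLeft_symm_apply_iff])

noncomputable def stayR :
    {j : R // ¬(π (.inr j)).isLeft} ≃ {b : R // ¬(π.symm (.inr b)).isLeft} :=
  matchEquiv (π.injective.comp Sum.inr_injective) Sum.inr_injective
    (fun _ => by simp [Sum.isRight_iff]) (fun _ => by simp [π.isRight_symm_apply_iff])

lemma apply_inl_of_isRight (i : {i : L // (π (.inl i)).isRight}) :
    π (.inl i) = .inr (π.crossLR i) :=
  matchEquiv_spec (π.injective.comp Sum.inl_injective) Sum.inr_injective _ _ i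

lemma apply_inr_of_isLeft (j : {j : R // (π (.inr j)).isLeft}) :
    π (.inr j) = .inl (π.crossRL j) :=
  matchEquiv_spec (π.injective.comp Sum.inr_injective) Sum.inl_injective _ _ j

lemma apply_inl_of_not_isRight (i : {i : L // ¬(π (.inl i)).isRight}) :
    π (.inl i) = .inl (π.stayL i) :=
  matchEquiv_spec (π.injective.comp Sum.inl_injective) Sum.inl_injective _ _ i

lemma apply_inr_of_not_isLeft (j : {j : R // ¬(π (.inr j)).isLeft}) :
    π (.inr j) = .inr (π.stayR j) :=
  matchEquiv_spec (π.injective.comp Sum.inr_injective) Sum.inr_injective _ _ j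

lemma card_isRight_symm_inl_eq_card_isLeft_symm_inr [Fintype L] [Fintype R] :
    Fintype.card {l : L // (π.symm (.inl l)).isRight}
      = Fintype.card {j : R // (π.symm (.inr j)).isLeft} := by
  have hcross := Fintype.card_congr π.crossLR
  have hstay := Fintype.card_congr π.stayL
  have h₁ := Fintype.card_subtype_compl fun i : L => (π (.inl i)).isRight
  have h₂ := Fintype.card_subtype_compl fun l : L => (π.symm (.inl l)).isRight
  have h₃ := Fintype.card_subtype_le fun i : L => (π (.inl i)).isRight
  have h₄ := Fintype.card_subtype_le fun l : L => (π.symm (.inl l)).isRight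
  omega

noncomputable def crossEquiv [Fintype L] [Fintype R] :
    {l : L // (π.symm (.inl l)).isRight} ≃ {j : R // (π.symm (.inr j)).isLeft} :=
  Fintype.equivOfCardEq π.card_isRight_symm_inl_eq_card_isLeft_symm_inr

variable {D : Type*}

lemma sumElim_patch_comp_inl (s : {l : L // (π.symm (.inl l)).isRight} → D)
    (m : {l : L // ¬(π.symm (.inl l)).isRight} → D)
    (t : {j : R // (π.symm (.inr j)).isLeft} → D) (m' : {j : R // ¬(π.symm (.inr j)).isLeft} → D) :
    (Sum.elim (patch _ s m) (patch _ t m') ∘ π) ∘ Sum.inl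
      = patch (fun i => (π (.inl i)).isRight) (t ∘ π.crossLR) (m ∘ π.stayL) := by
  funext i
  by_cases h : (π (.inl i)).isRight
  · rw [Function.comp_apply, Function.comp_apply, π.apply_inl_of_isRight ⟨i, h⟩, Sum.elim_inr,
      patch_coe_pos]
    exact (patch_coe_pos (t ∘ π.crossLR) (m ∘ π.stayL) ⟨i, h⟩).symm
  · rw [Function.comp_apply, Function.comp_apply, π.apply_inl_of_not_isRight ⟨i, h⟩, Sum.elim_inl,
      patch_coe_neg]
    exact (patch_coe_neg (t ∘ π.crossLR) (m ∘ π.stayL) ⟨i, h⟩).symm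

lemma sumElim_patch_comp_inr (s : {l : L // (π.symm (.inl l)).isRight} → D)
    (m : {l : L // ¬(π.symm (.inl l)).isRight} → D)
    (t : {j : R // (π.symm (.inr j)).isLeft} → D) (m' : {j : R // ¬(π.symm (.inr j)).isLeft} → D) :
    (Sum.elim (patch _ s m) (patch _ t m') ∘ π) ∘ Sum.inr
      = patch (fun j => (π (.inr j)).isLeft) (s ∘ π.crossRL) (m' ∘ π.stayR) := by
  funext j
  by_cases h : (π (.inr j)).isLeft
  · rw [Function.comp_apply, Function.comp_apply, π.apply_inr_of_isLeft ⟨j, h⟩, Sum.elim_inl,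
      patch_coe_pos]
    exact (patch_coe_pos (s ∘ π.crossRL) (m' ∘ π.stayR) ⟨j, h⟩).symm
  · rw [Function.comp_apply, Function.comp_apply, π.apply_inr_of_not_isLeft ⟨j, h⟩, Sum.elim_inr,
      patch_coe_neg]
    exact (patch_coe_neg (s ∘ π.crossRL) (m' ∘ π.stayR) ⟨j, h⟩).symm

end Equiv.Perm

lemma sum_sum_comm_sum_sum {A B C E M : Type*} [Fintype A] [Fintype B] [Fintype C] [Fintype E]
    [AddCommMonoid M] (X : A → B → C → E → M) :
    ∑ a, ∑ b, ∑ c, ∑ e, X a b c e = ∑ c, ∑ e, ∑ a, ∑ b, X a b c e := by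
  calc ∑ a, ∑ b, ∑ c, ∑ e, X a b c e = ∑ a, ∑ c, ∑ e, ∑ b, X a b c e :=
        Finset.sum_congr rfl fun a _ => by
          rw [Finset.sum_comm]
          exact Finset.sum_congr rfl fun c _ => Finset.sum_comm
    _ = ∑ c, ∑ e, ∑ a, ∑ b, X a b c e := by
        rw [Finset.sum_comm]
        exact Finset.sum_congr rfl fun c _ => Finset.sum_comm

lemma sum_conj_mul_mul_eq_sum_normSq {S M N : Type*} [Fintype S] [Fintype M] [Fintype N]
    (a : S → M → ℂ) (b : S → N → ℂ) :
    ∑ s, ∑ m, ∑ t, ∑ n, conj (a s m * b t n) * (a t m * b s n)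
      = ∑ m, ∑ n, (normSq (∑ s, conj (a s m) * b s n) : ℂ) := by
  simp_rw [← Complex.mul_conj, map_sum, map_mul, Complex.conj_conj, Finset.sum_mul_sum]
  rw [Finset.sum_comm]
  refine Finset.sum_congr rfl fun m _ => ?_
  conv_rhs => rw [Finset.sum_comm]
  refine Finset.sum_congr rfl fun s _ => ?_
  conv_rhs => rw [Finset.sum_comm]
  exact Finset.sum_congr rfl fun t _ => Finset.sum_congr rfl fun n _ => by ring

section Forms

variable {α L R D : Type*} [Fintype α] [DecidableEq α] [Fintype L] [DecidableEq L]
  [Fintype R] [DecidableEq R] [Fintype D]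

/-- `⟨u, P_π u⟩` for the vector `u` with coordinates indexed by `α → D`. -/
noncomputable def overlap (u : (α → D) → ℂ) (π : Perm α) : ℂ :=
  ∑ f : α → D, conj (u f) * u (f ∘ π)

noncomputable def permForm (u : (α → D) → ℂ) : ℂ :=
  ∑ π, overlap u π

def tensor (v : (L → D) → ℂ) (w : (R → D) → ℂ) : (L ⊕ R → D) → ℂ :=
  fun F => v (F ∘ Sum.inl) * w (F ∘ Sum.inr)

lemma sum_sumElim {M : Type*} [AddCommMonoid M] (φ : (L ⊕ R → D) → M) :
    ∑ F : L ⊕ R → D, φ F = ∑ f : L → D, ∑ g : R → D, φ (Sum.elim f g) := by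
  rw [← (sumArrowEquivProdArrow L R D).symm.sum_comp, Fintype.sum_prod_type]
  rfl

lemma overlap_eq_sum_normSq {u : (α → D) → ℂ} {π : Perm α} (hu : ∀ f, u (f ∘ π) = u f) :
    overlap u π = ∑ f, (normSq (u f) : ℂ) := by
  simp only [overlap, hu, Complex.normSq_eq_conj_mul_self]

/-- Split `F` on the left positions into the part `s` read by the right half of `F ∘ π` and the
rest `m`, and on the right positions into the part `t` read by the left half and the rest `m'`.
Transporting `t` along `crossEquiv` and using the invariance of `V` and `W`, the overlap becomes
`Σ_{m, m'} |Σ_s conj (V (s, m)) W (s, m')|²`. -/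
theorem re_overlap_tensor_nonneg {V : (L → D) → ℂ} {W : (R → D) → ℂ}
    (hV : ∀ (σ : Perm L) f, V (f ∘ σ) = V f) (hW : ∀ (σ : Perm R) g, W (g ∘ σ) = W g)
    (π : Perm (L ⊕ R)) : 0 ≤ (overlap (tensor V W) π).re := by
  let κ := π.crossEquiv
  have hL : ∀ s m t m', V ((Sum.elim (patch _ s m) (patch _ t m') ∘ π) ∘ Sum.inl)
      = V (patch _ (t ∘ κ) m) := by
    intro s m t m'
    rw [π.sumElim_patch_comp_inl, ← apply_patch_comp_eq hV (π.crossLR.trans κ.symm) π.stayL]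
    congr 2
    funext i
    simp
  have hR : ∀ s m t m', W ((Sum.elim (patch _ s m) (patch _ t m') ∘ π) ∘ Sum.inr)
      = W (patch _ (s ∘ κ.symm) m') := by
    intro s m t m'
    rw [π.sumElim_patch_comp_inr, ← apply_patch_comp_eq hW (π.crossRL.trans κ) π.stayR]
    congr 2
    funext i
    simp
  have hsplit : overlap (tensor V W) π
      = ∑ s, ∑ m, ∑ t, ∑ m', conj (V (patch _ s m) * W (patch _ (t ∘ κ.symm) m'))
          * (V (patch _ t m) * W (patch _ (s ∘ κ.symm) m')) := by
    rw [overlap, sum_sumElim, sum_patch fun l : L => (π.symm (.inl l)).isRight]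
    refine Finset.sum_congr rfl fun s _ => Finset.sum_congr rfl fun m _ => ?_
    rw [sum_patch fun j : R => (π.symm (.inr j)).isLeft, ← sum_comp_equiv κ.symm]
    refine Finset.sum_congr rfl fun t _ => Finset.sum_congr rfl fun m' _ => ?_
    simp only [tensor, Sum.elim_comp_inl, Sum.elim_comp_inr, hL, hR]
    simp [Function.comp_assoc]
  rw [hsplit, sum_conj_mul_mul_eq_sum_normSq]
  simp only [Complex.re_sum, Complex.ofReal_re]
  exact Finset.sum_nonneg fun m _ => Finset.sum_nonneg fun n _ => Complex.normSq_nonneg _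

lemma sum_sum_conj_comp_mul_comp (σ τ : Perm α) (u : (α → D) → ℂ) :
    ∑ π : Perm α, ∑ f : α → D, conj (u (f ∘ σ)) * u (f ∘ π ∘ τ) = permForm u := by
  calc ∑ π : Perm α, ∑ f : α → D, conj (u (f ∘ σ)) * u (f ∘ π ∘ τ)
      = ∑ π : Perm α, ∑ f : α → D, conj (u (f ∘ σ)) * u ((f ∘ σ) ∘ (σ⁻¹ * π * τ)) := by
        simp only [Perm.coe_mul, ← Function.comp_assoc]
        simp [Function.comp_assoc]
    _ = ∑ π : Perm α, overlap u (σ⁻¹ * π * τ) := by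
        exact Finset.sum_congr rfl fun π _ =>
          sum_comp_equiv σ fun f => conj (u f) * u (f ∘ (σ⁻¹ * π * τ))
    _ = permForm u :=
        ((Equiv.mulLeft σ⁻¹).trans (Equiv.mulRight τ)).sum_comp (overlap u)

end Forms

section Average

variable {α L R D G : Type*} [Group G] [Fintype G]

noncomputable def average (φ : G →* Perm α) (u : (α → D) → ℂ) : (α → D) → ℂ :=
  fun f => ∑ g, u (f ∘ φ g)

lemma average_comp (φ : G →* Perm α) (u : (α → D) → ℂ) (h : G) (f : α → D) :
    average φ u (f ∘ φ h) = average φ u f := by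
  conv_rhs => rw [average, ← Equiv.sum_comp (Equiv.mulLeft h)]
  simp [average, Function.comp_assoc]

variable [Fintype α] [DecidableEq α] [Fintype L] [DecidableEq L] [Fintype R] [DecidableEq R]

noncomputable def symmetrize (u : (α → D) → ℂ) : (α → D) → ℂ :=
  average (MonoidHom.id (Perm α)) u

lemma symmetrize_comp (u : (α → D) → ℂ) (σ : Perm α) (f : α → D) :
    symmetrize u (f ∘ σ) = symmetrize u f :=
  average_comp _ u σ f

lemma average_sumCongrHom_tensor (v : (L → D) → ℂ) (w : (R → D) → ℂ) :
    average (Perm.sumCongrHom L R) (tensor v w) = tensor (symmetrize v) (symmetrize w) := by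
  funext F
  simp only [average, tensor, symmetrize, Fintype.sum_prod_type, Finset.sum_mul_sum]
  rfl

variable [Fintype D]

lemma permForm_average (φ : G →* Perm α) (u : (α → D) → ℂ) :
    permForm (average φ u) = (Fintype.card G : ℂ) ^ 2 * permForm u := by
  calc permForm (average φ u)
      = ∑ g, ∑ h, ∑ π : Perm α, ∑ f : α → D, conj (u (f ∘ φ g)) * u (f ∘ π ∘ φ h) := by
        simp only [permForm, overlap, average, map_sum, Finset.sum_mul_sum]
        exact sum_sum_comm_sum_sum _
    _ = (Fintype.card G : ℂ) ^ 2 * permForm u := by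
        simp [sum_sum_conj_comp_mul_comp, Finset.card_univ]
        ring

lemma sum_normSq_symmetrize (u : (α → D) → ℂ) :
    ∑ f, normSq (symmetrize u f) = Fintype.card (Perm α) * (permForm u).re := by
  have hsq := permForm_average (MonoidHom.id (Perm α)) u
  rw [← symmetrize, permForm] at hsq
  simp only [overlap_eq_sum_normSq (symmetrize_comp u _), Finset.sum_const, Finset.card_univ,
    nsmul_eq_mul, sq, mul_assoc] at hsq
  have hcard : (Fintype.card (Perm α) : ℂ) ≠ 0 := by exact_mod_cast Fintype.card_ne_zero
  have := congrArg Complex.re (mul_left_cancel₀ hcard hsq)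
  simpa [Complex.re_sum] using this

lemma sum_normSq_tensor (v : (L → D) → ℂ) (w : (R → D) → ℂ) :
    ∑ F, normSq (tensor v w F) = (∑ f, normSq (v f)) * ∑ g, normSq (w g) := by
  simp only [tensor, sum_sumElim, Sum.elim_comp_inl, Sum.elim_comp_inr, Complex.normSq_mul,
    Fintype.sum_mul_sum]

theorem re_permForm_mul_le (v : (L → D) → ℂ) (w : (R → D) → ℂ) :
    (permForm v).re * (permForm w).re ≤ (permForm (tensor v w)).re := by
  set U := tensor (symmetrize v) (symmetrize w) with hUdef
  set N : ℝ := ((Fintype.card (Perm L × Perm R) : ℕ) : ℝ) with hNdef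
  have hU : (permForm U).re = N ^ 2 * (permForm (tensor v w)).re := by
    rw [hUdef, ← average_sumCongrHom_tensor, permForm_average, ← Complex.ofReal_natCast,
      ← Complex.ofReal_pow, Complex.re_ofReal_mul]
  have hlow : N * ((∑ f, normSq (symmetrize v f)) * ∑ g, normSq (symmetrize w g))
      ≤ (permForm U).re := by
    calc N * ((∑ f, normSq (symmetrize v f)) * ∑ g, normSq (symmetrize w g))
        = ∑ p, (overlap U (Perm.sumCongrHom L R p)).re := by
          have hinv : ∀ p F, U (F ∘ Perm.sumCongrHom L R p) = U F := fun p F => by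
            rw [hUdef, ← average_sumCongrHom_tensor, average_comp]
          simp only [← sum_normSq_tensor, ← hUdef, overlap_eq_sum_normSq (hinv _),
            Complex.re_sum, Complex.ofReal_re, Finset.sum_const, Finset.card_univ, nsmul_eq_mul,
            hNdef]
      _ ≤ ∑ π, (overlap U π).re :=
          (Finset.sum_map _ ⟨_, Perm.sumCongrHom_injective⟩ _).symm.trans_le
            (Finset.sum_le_sum_of_subset_of_nonneg (Finset.subset_univ _) fun π _ _ =>
              re_overlap_tensor_nonneg (symmetrize_comp v) (symmetrize_comp w) π)
      _ = (permForm U).re := by rw [permForm, Complex.re_sum]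
  have hN : N = Fintype.card (Perm L) * Fintype.card (Perm R) := by
    simp [N, Fintype.card_prod]
  rw [sum_normSq_symmetrize, sum_normSq_symmetrize, hU] at hlow
  refine le_of_mul_le_mul_left ?_ (by positivity : 0 < N ^ 2)
  calc N ^ 2 * ((permForm v).re * (permForm w).re)
      = N * ((Fintype.card (Perm L) * (permForm v).re) *
          (Fintype.card (Perm R) * (permForm w).re)) := by rw [hN]; ring
    _ ≤ _ := hlow

end Average

lemma trace_mul_sum_permOp {α : Type*} [Fintype α] [DecidableEq α] {d : ℕ}
    (ρ : Matrix (α → Fin d) (α → Fin d) ℂ) :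
    (ρ * ∑ π, permOp d α π).trace = ∑ π : Perm α, ∑ f, ρ f (f ∘ π) := by
  rw [Matrix.mul_sum, trace_sum, ← Equiv.sum_comp (Equiv.inv (Perm α))]
  refine Finset.sum_congr rfl fun π _ => Finset.sum_congr rfl fun f _ => ?_
  simp [Matrix.mul_apply, permOp]

lemma trace_mul_sum_permOp_eq_sum_permForm {α ι : Type*} [Fintype α] [DecidableEq α] [Fintype ι]
    {d : ℕ} {ρ : Matrix (α → Fin d) (α → Fin d) ℂ} {c : ι → (α → Fin d) → ℂ}
    (hρ : ∀ f g, ρ f g = ∑ i, conj (c i f) * c i g) :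
    (ρ * ∑ π, permOp d α π).trace = ∑ i, permForm (c i) := by
  simp only [trace_mul_sum_permOp, hρ, permForm, overlap]
  exact (Finset.sum_congr rfl fun π _ => Finset.sum_comm).trans Finset.sum_comm

open scoped MatrixOrder in
lemma Matrix.PosSemidef.exists_apply_eq_sum_conj_mul {n : Type*} [Fintype n] [DecidableEq n]
    {A : Matrix n n ℂ} (hA : A.PosSemidef) :
    ∃ B : Matrix n n ℂ, ∀ i j, A i j = ∑ k, conj (B k i) * B k j := by
  obtain ⟨B, rfl⟩ := CStarAlgebra.nonneg_iff_eq_star_mul_self.mp hA.nonneg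
  exact ⟨B, fun i j => by simp [Matrix.mul_apply]⟩

theorem stmt_14_general (x y d : ℕ)
    (ρx : Matrix (Fin x → Fin d) (Fin x → Fin d) ℂ)
    (hρx : ρx.PosSemidef)
    (ρy : Matrix (Fin y → Fin d) (Fin y → Fin d) ℂ)
    (hρy : ρy.PosSemidef)
    (M : Matrix ((Fin x ⊕ Fin y) → Fin d) ((Fin x ⊕ Fin y) → Fin d) ℂ)
    (hM : ∀ F G, M F G =
      ρx (F ∘ Sum.inl) (G ∘ Sum.inl) * ρy (F ∘ Sum.inr) (G ∘ Sum.inr)) :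
    (Matrix.trace (M * ∑ π : Equiv.Perm (Fin x ⊕ Fin y), permOp d (Fin x ⊕ Fin y) π)).re
      ≥ (Matrix.trace (ρx * ∑ π : Equiv.Perm (Fin x), permOp d (Fin x) π)).re *
        (Matrix.trace (ρy * ∑ π : Equiv.Perm (Fin y), permOp d (Fin y) π)).re := by
  obtain ⟨B, hB⟩ := hρx.exists_apply_eq_sum_conj_mul
  obtain ⟨C, hC⟩ := hρy.exists_apply_eq_sum_conj_mul
  have hBC : ∀ F G, M F G
      = ∑ p : _ × _, conj (tensor (B p.1) (C p.2) F) * tensor (B p.1) (C p.2) G := by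
    intro F G
    rw [hM, hB, hC, Finset.sum_mul_sum, Fintype.sum_prod_type]
    refine Finset.sum_congr rfl fun a _ => Finset.sum_congr rfl fun b _ => ?_
    simp only [tensor, map_mul]
    ring
  rw [trace_mul_sum_permOp_eq_sum_permForm hB, trace_mul_sum_permOp_eq_sum_permForm hC,
    trace_mul_sum_permOp_eq_sum_permForm hBC, Complex.re_sum, Complex.re_sum, Complex.re_sum,
    Fintype.sum_mul_sum, Fintype.sum_prod_type, ge_iff_le]
  exact Finset.sum_le_sum fun a _ => Finset.sum_le_sum fun b _ => re_permForm_mul_le _ _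

/-- Superadditivity of symmetric-subspace overlaps (Lemma 16 of Chen–Cotler–Huang–Li
as used in the paper): for density matrices `ρ_x` on `x` qudits and `ρ_y` on `y` qudits,
`tr((ρ_x ⊗ ρ_y)·Σ_{π ∈ S_{x+y}} P_π) ≥ tr(ρ_x·Σ_{π ∈ S_x} P_π)·tr(ρ_y·Σ_{π ∈ S_y} P_π)`. -/
theorem stmt_14 (x y d : ℕ) (hx : 1 ≤ x) (hy : 1 ≤ y) (hd : 1 ≤ d)
    (ρx : Matrix (Fin x → Fin d) (Fin x → Fin d) ℂ)
    (hρx : ρx.PosSemidef) (hρxtr : ρx.trace = 1)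
    (ρy : Matrix (Fin y → Fin d) (Fin y → Fin d) ℂ)
    (hρy : ρy.PosSemidef) (hρytr : ρy.trace = 1)
    (M : Matrix ((Fin x ⊕ Fin y) → Fin d) ((Fin x ⊕ Fin y) → Fin d) ℂ)
    (hM : ∀ F G, M F G =
      ρx (F ∘ Sum.inl) (G ∘ Sum.inl) * ρy (F ∘ Sum.inr) (G ∘ Sum.inr)) :
    (Matrix.trace (M * ∑ π : Equiv.Perm (Fin x ⊕ Fin y), permOp d (Fin x ⊕ Fin y) π)).re
      ≥ (Matrix.trace (ρx * ∑ π : Equiv.Perm (Fin x), permOp d (Fin x) π)).re *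
        (Matrix.trace (ρy * ∑ π : Equiv.Perm (Fin y), permOp d (Fin y) π)).re :=
  stmt_14_general x y d ρx hρx ρy hρy M hM
end
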